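/- arXiv:2509.00162 — 3 statements merged into one kernel-verified Lean document; each statement's English description precedes it below -/
import Mathlib

section
/- Let θ be the substitution on {a,b} with θ(a) = ab and θ(b) = aa, let X_θ be its substitution subshift, let A = {x ∈ X_θ : (x_0,…,x_7) = (a,b,a,a,a,b,a,b)}, and define p : X_θ → {1,2,3} by p(x) = 3 if x ∈ A, p(x) = 1 if x ∈ σ(A), and p(x) = 2 otherwise. Then p is continuous, the map S(x) = σ^{p(x)}(x) is a homeomorphism of X_θ, every S-orbit is dense in X_θ, and every σ-orbit in X_θ is the union of exactly 2 distinct S-orbits (i.e., the speedup has orbit number 2). -/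
/-!
Write `pd` for the period-doubling sequence, the one-sided fixed point of `θ`. Every point of
`X_θ` looks locally like `pd`, it contains arbitrarily long prefixes of `pd`, and it is not
shift-periodic. The word `w = θ³(a) = abaaabab` never occurs at two adjacent positions, so `p`
depends only on `x₋₁ … x₇` and the analogous backward rule inverts `S`.

Along the shift orbit of `x`, give position `n` the label `orbitLabel x n ∈ ZMod 2`, which
increases by one from `k` to `k + 1` unless `w` occurs at `k - 1`. The speedup moves each
position to the next one with the same label, so the `S`-orbit of `σⁿ x` is
`{σᵐ x : m has the label of n}`, and the two labels give exactly two `S`-orbits. For density,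
any window of `y` reappears in `x` at two positions `L = 2 ^ G` apart inside a region where `x`
is `L`-periodic; one period contains an odd number of occurrences of `w`, so the two positions
carry different labels.
-/

open Set Topology Classical

noncomputable section

/-- The left shift `σ` on bi-infinite sequences: `(σ x) n = x (n+1)`. -/
def shiftMap {A : Type} (x : ℤ → A) : ℤ → A := fun n => x (n + 1)

/-- The shift by an integer amount: `shiftZ n x = σ^n x`. -/
def shiftZ {A : Type} (n : ℤ) (x : ℤ → A) : ℤ → A := fun m => x (m + n)

/-- A bi-infinite sequence is Toeplitz if every coordinate is periodically repeated. -/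
def IsToeplitz {A : Type} (x : ℤ → A) : Prop :=
  ∀ i : ℤ, ∃ p : ℕ, 0 < p ∧ ∀ k : ℤ, x (i + k * (p : ℤ)) = x i

/-- The closure of the full shift orbit of `x`. -/
def orbitClosure {A : Type} [TopologicalSpace A] (x : ℤ → A) : Set (ℤ → A) :=
  closure {y | ∃ n : ℤ, shiftZ n x = y}

/-- The finite word `x_i x_{i+1} ⋯ x_{i+n-1}`. -/
def seqWord {A : Type} (x : ℤ → A) (i : ℤ) (n : ℕ) : List A :=
  List.ofFn fun m : Fin n => x (i + (m : ℕ))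

/-- Iterates `θ^k` of a substitution, applied to a letter. -/
def substPow {A : Type} (θ : A → List A) : ℕ → A → List A
  | 0, a => [a]
  | k + 1, a => (θ a).flatMap (substPow θ k)

/-- The substitution subshift of `θ`: all sequences whose finite subwords occur in
some `θ^k(a)`. -/
def substShift {A : Type} (θ : A → List A) : Set (ℤ → A) :=
  {x | ∀ i : ℤ, ∀ n : ℕ, ∃ (k : ℕ) (a : A), (seqWord x i n).IsInfix (substPow θ k a)}

/-- The full orbit of `x` under an (invertible) map `S`, within the set `X`. -/
def orbitIn {α : Type} (S : α → α) (X : Set α) (x : α) : Set α :=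
  {y | y ∈ X ∧ ∃ n : ℕ, S^[n] x = y ∨ S^[n] y = x}

/-- Every `S`-orbit within `X` is dense in `X`. -/
def MinimalOn {α : Type} [TopologicalSpace α] (S : α → α) (X : Set α) : Prop :=
  ∀ x ∈ X, X ⊆ closure (orbitIn S X x)

/-- Every `T`-orbit in `X` is the union of exactly `c` distinct `S`-orbits. -/
def OrbitNumberOn {α : Type} (T S : α → α) (X : Set α) (c : ℕ) : Prop :=
  ∀ x ∈ X, ∃ r : Fin c → α,
    (∀ i, r i ∈ orbitIn T X x) ∧
    (∀ i j, i ≠ j → r j ∉ orbitIn S X (r i)) ∧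
    (∀ y ∈ orbitIn T X x, ∃ i, y ∈ orbitIn S X (r i))

/-- `S` restricts to a homeomorphism of the subset `X`. -/
def RestrictsToHomeomorph {α : Type} [TopologicalSpace α] (S : α → α) (X : Set α) : Prop :=
  ∃ e : X ≃ₜ X, ∀ x : X, (e x : α) = S (x : α)

/-- The systems `(X, S)` and `(Y, R)` are topologically conjugate. -/
def TopConj {α β : Type} [TopologicalSpace α] [TopologicalSpace β]
    (X : Set α) (S : α → α) (Y : Set β) (R : β → β) : Prop :=
  ∃ (hS : Set.MapsTo S X X) (hR : Set.MapsTo R Y Y) (h : X ≃ₜ Y),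
    ∀ x : X, h (Set.MapsTo.restrict S X X hS x) = Set.MapsTo.restrict R Y Y hR (h x)

/-- `(Y, R)` is a topological factor of `(X, S)`. -/
def IsFactorOn {α β : Type} [TopologicalSpace α] [TopologicalSpace β]
    (X : Set α) (S : α → α) (Y : Set β) (R : β → β) : Prop :=
  ∃ F : α → β, Set.MapsTo F X Y ∧ ContinuousOn F X ∧ Set.SurjOn F X Y ∧
    ∀ x ∈ X, F (S x) = R (F x)

/-- `(X, S)` is a Toeplitz flow: it is topologically conjugate to the orbit closure of
some Toeplitz sequence over some finite alphabet, with the shift map. -/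
def IsToeplitzFlow {α : Type} [TopologicalSpace α] (X : Set α) (S : α → α) : Prop :=
  ∃ (B : Type) (_ : Fintype B) (z : ℤ → B), IsToeplitz z ∧
    (letI : TopologicalSpace B := ⊥
     TopConj X S (orbitClosure z) shiftMap)

/-- `Per_p(x)`: the set of positions where `x` is periodic with period `p`. -/
def PerSet {A : Type} (x : ℤ → A) (p : ℕ) : Set ℤ :=
  {k | ∀ n : ℤ, x (k + n * (p : ℤ)) = x k}

/-- `p` is an essential period of `x`. -/
def IsEssentialPeriod {A : Type} (x : ℤ → A) (p : ℕ) : Prop :=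
  0 < p ∧ ¬ ∃ q : ℕ, 0 < q ∧ q < p ∧
    ((fun k => k + (q : ℤ)) '' PerSet x p = PerSet x p) ∧
    (∀ k ∈ PerSet x p, x (k + (q : ℤ)) = x k)

/-- A period structure for a Toeplitz sequence `x`. -/
def IsPeriodStructure {A : Type} (x : ℤ → A) (p : ℕ → ℕ) : Prop :=
  StrictMono p ∧ (∀ k, IsEssentialPeriod x (p k)) ∧
  (∀ k, p k ∣ p (k + 1)) ∧ (⋃ k, PerSet x (p k)) = Set.univ

/-- `x` is a (σ-)periodic sequence. -/
def IsPeriodicSeq {A : Type} (x : ℤ → A) : Prop :=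
  ∃ n : ℕ, 0 < n ∧ ∀ m : ℤ, x (m + (n : ℤ)) = x m

/-- `z` is the bi-infinite concatenation of the `ψ`-images of the letters of `y`,
with `ψ(y₀)` beginning at coordinate `0`. -/
def IsConcat {B C : Type} (ψ : B → List C) (y : ℤ → B) (z : ℤ → C) : Prop :=
  ∃ s : ℤ → ℤ, s 0 = 0 ∧
    (∀ n : ℤ, s (n + 1) = s n + ((ψ (y n)).length : ℤ)) ∧
    (∀ n : ℤ, ∀ j : Fin (ψ (y n)).length, z (s n + (j : ℕ)) = (ψ (y n)).get j)

/-- `p(x,n) = Σ_{i<n} p(Sⁱ x)`. -/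
def psum {X : Type} (p : X → ℕ) (S : X → X) (x : X) (n : ℕ) : ℕ :=
  ∑ i ∈ Finset.range n, p (S^[i] x)


/-- The substitution θ(a) = ab, θ(b) = aa on the alphabet {a, b} = Fin 2 (a = 0, b = 1). -/
def theta : Fin 2 → List (Fin 2) := fun i => if i = 0 then [0, 1] else [0, 0]

/-- The cylinder set A = [θ³(a)] = {x ∈ X_θ : x₀…x₇ = abaaabab}. -/
def Aset : Set (ℤ → Fin 2) :=
  {x | x ∈ substShift theta ∧ seqWord x 0 8 = [0, 1, 0, 0, 0, 1, 0, 1]}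

open scoped Classical in
/-- The jump function: p = 3 on A, p = 1 on σ(A), p = 2 elsewhere. -/
noncomputable def jump (x : ℤ → Fin 2) : ℕ :=
  if x ∈ Aset then 3 else if x ∈ shiftMap '' Aset then 1 else 2

/-- The speedup map S(x) = σ^{p(x)}(x). -/
noncomputable def Sspeed (x : ℤ → Fin 2) : ℤ → Fin 2 := shiftMap^[jump x] x

/-- The period-doubling sequence `θ^∞(a) = abaaabab…`: `periodDoubling n = 1` iff the 2-adic
valuation of `n + 1` is odd. -/
def periodDoubling : ℕ → Fin 2
  | n => if _h : n % 2 = 1 then 1 - periodDoubling (n / 2) else 0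
decreasing_by omega

namespace periodDoubling

lemma two_mul (m : ℕ) : periodDoubling (2 * m) = 0 := by
  rw [periodDoubling]; simp

lemma two_mul_add_one (m : ℕ) : periodDoubling (2 * m + 1) = 1 - periodDoubling m := by
  rw [periodDoubling]; simp [Nat.add_div_of_dvd_right]

lemma zero : periodDoubling 0 = 0 := two_mul 0

lemma one : periodDoubling 1 = 1 := by
  simpa [zero] using two_mul_add_one 0

lemma two : periodDoubling 2 = 0 := two_mul 1

lemma two_mul_add_one_eq_one_iff {k : ℕ} :
    periodDoubling (2 * k + 1) = 1 ↔ periodDoubling k = 0 := by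
  rw [two_mul_add_one]; generalize periodDoubling k = z; revert z; decide

lemma two_mul_add_one_eq_zero_iff {k : ℕ} :
    periodDoubling (2 * k + 1) = 0 ↔ periodDoubling k = 1 := by
  rw [two_mul_add_one]; generalize periodDoubling k = z; revert z; decide

lemma eq_one_iff {n : ℕ} : periodDoubling n = 1 ↔ ∃ k, n = 2 * k + 1 ∧ periodDoubling k = 0 := by
  obtain ⟨k, rfl | rfl⟩ := Nat.even_or_odd' n
  · rw [two_mul]
    constructor
    · intro h; cases h
    · rintro ⟨k', hk', -⟩; omega
  · rw [two_mul_add_one_eq_one_iff]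
    exact ⟨fun h => ⟨k, rfl, h⟩, fun ⟨k', hk', h⟩ => by rwa [show k = k' by omega]⟩

lemma succ_eq_zero_of_eq_one {n : ℕ} (h : periodDoubling n = 1) : periodDoubling (n + 1) = 0 := by
  obtain ⟨k, rfl, -⟩ := eq_one_iff.1 h
  exact two_mul (k + 1)

lemma pow_mul_add_of_succ_lt {K r : ℕ} (i : ℕ) (hr : r + 1 < 2 ^ K) :
    periodDoubling (2 ^ K * i + r) = periodDoubling r := by
  induction K generalizing r with
  | zero => omega
  | succ K ih =>
    obtain ⟨r, rfl | rfl⟩ := Nat.even_or_odd' r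
    · rw [show 2 ^ (K + 1) * i + 2 * r = 2 * (2 ^ K * i + r) by ring, two_mul, two_mul]
    · rw [show 2 ^ (K + 1) * i + (2 * r + 1) = 2 * (2 ^ K * i + r) + 1 by ring,
        two_mul_add_one, two_mul_add_one, ih (by rw [pow_succ] at hr; omega)]

lemma pow_mul_add {K r i : ℕ} (hi : periodDoubling i = 0) (hr : r < 2 ^ K) :
    periodDoubling (2 ^ K * i + r) = periodDoubling r := by
  induction K generalizing r with
  | zero =>
    obtain rfl : r = 0 := by omega
    simpa [zero] using hi
  | succ K ih =>
    obtain ⟨r, rfl | rfl⟩ := Nat.even_or_odd' r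
    · rw [show 2 ^ (K + 1) * i + 2 * r = 2 * (2 ^ K * i + r) by ring, two_mul, two_mul]
    · rw [show 2 ^ (K + 1) * i + (2 * r + 1) = 2 * (2 ^ K * i + r) + 1 by ring,
        two_mul_add_one, two_mul_add_one, ih (by rw [pow_succ] at hr; omega)]

lemma two_pow_mul_odd_sub_one (t s : ℕ) :
    periodDoubling (2 ^ t * (2 * s + 1) - 1) = periodDoubling (2 ^ t - 1) := by
  induction t with
  | zero => simp [two_mul, zero]
  | succ t ih =>
    have h1 : 1 ≤ 2 ^ t * (2 * s + 1) := Nat.one_le_iff_ne_zero.2 (by positivity)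
    have h2 : 1 ≤ 2 ^ t := Nat.one_le_two_pow
    rw [show 2 ^ (t + 1) * (2 * s + 1) - 1 = 2 * (2 ^ t * (2 * s + 1) - 1) + 1 by
        rw [pow_succ]; ring_nf; omega,
      show 2 ^ (t + 1) - 1 = 2 * (2 ^ t - 1) + 1 by rw [pow_succ]; omega,
      two_mul_add_one, two_mul_add_one, ih]

end periodDoubling

section Shift

variable {A : Type}

@[simp] lemma shiftZ_apply (n : ℤ) (x : ℤ → A) (m : ℤ) : shiftZ n x m = x (m + n) := rfl

@[simp] lemma shiftZ_zero (x : ℤ → A) : shiftZ 0 x = x := by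
  funext m; simp

lemma shiftZ_shiftZ (a b : ℤ) (x : ℤ → A) : shiftZ a (shiftZ b x) = shiftZ (a + b) x := by
  funext m; simp [add_assoc]

lemma shiftMap_iterate (k : ℕ) (x : ℤ → A) : shiftMap^[k] x = shiftZ k x := by
  induction k with
  | zero => simp
  | succ k ih =>
    rw [Function.iterate_succ_apply', ih]
    funext m; simp [shiftMap, add_assoc, add_comm (1 : ℤ)]

lemma continuous_shiftZ [TopologicalSpace A] (n : ℤ) :
    Continuous (shiftZ n : (ℤ → A) → ℤ → A) :=
  continuous_pi fun m => continuous_apply (m + n)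

lemma shiftZ_mem_substShift {θ : A → List A} {x : ℤ → A} (hx : x ∈ substShift θ) (n : ℤ) :
    shiftZ n x ∈ substShift θ := by
  intro i L
  have : seqWord (shiftZ n x) i L = seqWord x (i + n) L := by
    simp only [seqWord, shiftZ_apply, add_right_comm]
  rw [this]
  exact hx (i + n) L

lemma seqWord_eq_map_range_iff {x : ℤ → A} {i : ℤ} {n : ℕ} {f : ℕ → A} :
    seqWord x i n = (List.range n).map f ↔ ∀ r < n, x (i + r) = f r := by
  rw [seqWord, List.ext_getElem_iff]
  simp

lemma continuous_shiftZ_of_isLocallyConstant [TopologicalSpace A] {f : (ℤ → A) → ℤ}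
    (hf : IsLocallyConstant f) : Continuous fun x => shiftZ (f x) x :=
  continuous_iff_continuousAt.2 fun x =>
    (continuous_shiftZ (f x)).continuousAt.congr <| (hf.eventually_eq x).mono fun y hy => by
      simp only [hy]

lemma substPow_succ' (θ : A → List A) (k : ℕ) (a : A) :
    substPow θ (k + 1) a = (substPow θ k a).flatMap θ := by
  induction k generalizing a with
  | zero => simp [substPow]
  | succ k ih => simp only [substPow, List.flatMap_assoc] at ih ⊢; simp only [ih]

end Shift

lemma theta_periodDoubling (i : ℕ) :
    theta (periodDoubling i) = [periodDoubling (2 * i), periodDoubling (2 * i + 1)] := by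
  rw [periodDoubling.two_mul, periodDoubling.two_mul_add_one]
  generalize periodDoubling i = z
  revert z; decide

lemma flatMap_theta_map_range (n : ℕ) :
    ((List.range n).map periodDoubling).flatMap theta =
      (List.range (2 * n)).map periodDoubling := by
  induction n with
  | zero => rfl
  | succ n ih =>
    rw [List.range_succ, List.map_append, List.flatMap_append, ih,
      show 2 * (n + 1) = 2 * n + 1 + 1 by ring, List.range_succ, List.range_succ]
    simp [theta_periodDoubling]

lemma substPow_theta_zero (k : ℕ) :
    substPow theta k 0 = (List.range (2 ^ k)).map periodDoubling := by
  induction k with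
  | zero => simp [substPow, periodDoubling.zero]
  | succ k ih => rw [substPow_succ', ih, flatMap_theta_map_range, pow_succ, mul_comm]

lemma isInfix_substPow_theta (k : ℕ) (a : Fin 2) :
    substPow theta k a <:+: substPow theta (k + 1) 0 := by
  have : substPow theta (k + 1) 0 = substPow theta k 0 ++ substPow theta k 1 := by
    simp [substPow, theta]
  rw [this]
  fin_cases a
  · exact (List.prefix_append _ _).isInfix
  · exact (List.suffix_append _ _).isInfix

lemma exists_window_eq_periodDoubling {x : ℤ → Fin 2} (hx : x ∈ substShift theta) (i : ℤ)
    (L : ℕ) : ∃ s : ℕ, ∀ r < L, x (i + r) = periodDoubling (s + r) := by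
  obtain ⟨k, a, hk⟩ := hx i L
  have := hk.trans (isInfix_substPow_theta k a)
  rw [substPow_theta_zero, List.infix_iff_getElem?] at this
  obtain ⟨s, -, hs⟩ := this
  refine ⟨s, fun r hr => ?_⟩
  obtain ⟨j, hj, hxj⟩ : ∃ j, (List.range (2 ^ (k + 1)))[r + s]? = some j ∧
      periodDoubling j = x (i + r) := by
    simpa [seqWord] using hs r (by simpa [seqWord] using hr)
  obtain ⟨_, hrj⟩ := List.getElem?_eq_some_iff.1 hj
  rw [List.getElem_range] at hrj
  rw [← hxj, ← hrj, add_comm]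

lemma exists_block_eq_periodDoubling {x : ℤ → Fin 2} (hx : x ∈ substShift theta) (K : ℕ) :
    ∃ n : ℤ, ∀ r : ℕ, r < 2 ^ K → x (n + r) = periodDoubling r := by
  obtain ⟨s, hs⟩ := exists_window_eq_periodDoubling hx 0 (2 ^ (K + 2))
  have hP : 0 < 2 ^ K := by positivity
  have h4 : 2 ^ (K + 2) = 4 * 2 ^ K := by ring
  have hlo := Nat.mul_div_le s (2 ^ K)
  have hhi := Nat.lt_mul_div_succ s hP
  -- among two consecutive level-`K` blocks inside the window, one has index `i` with `pd i = 0`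
  obtain ⟨i, hsi, hiw, hi⟩ : ∃ i, s < 2 ^ K * i ∧ 2 ^ K * i + 2 ^ K ≤ s + 2 ^ (K + 2) ∧
      periodDoubling i = 0 := by
    by_cases h : periodDoubling (s / 2 ^ K + 1) = 0
    · exact ⟨_, hhi, by nlinarith, h⟩
    · refine ⟨s / 2 ^ K + 2, by nlinarith, by nlinarith, ?_⟩
      exact periodDoubling.succ_eq_zero_of_eq_one (Fin.eq_one_of_ne_zero _ h)
  refine ⟨(2 ^ K * i - s : ℕ), fun r hr => ?_⟩
  have := hs (2 ^ K * i - s + r) (by omega)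
  rw [zero_add, Nat.cast_add] at this
  rw [this, show s + (2 ^ K * i - s + r) = 2 ^ K * i + r by omega,
    periodDoubling.pow_mul_add hi hr]

lemma exists_periodDoubling_add_ne {q : ℕ} (hq : 0 < q) :
    ∃ r, periodDoubling (r + q) ≠ periodDoubling r := by
  obtain ⟨e, d, hd, rfl⟩ := Nat.exists_eq_two_pow_mul_odd hq.ne'
  obtain ⟨d, rfl⟩ := hd
  refine ⟨2 ^ (e + 1) - 1, ?_⟩
  -- `r + q + 1` is an odd multiple of `2 ^ e` and `r + 1` one of `2 ^ (e + 1)`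
  have h1 := periodDoubling.two_pow_mul_odd_sub_one e (d + 1)
  have h2 := periodDoubling.two_mul_add_one (2 ^ e - 1)
  have : 1 ≤ 2 ^ e := Nat.one_le_two_pow
  rw [show 2 ^ e * (2 * (d + 1) + 1) - 1 = 2 ^ (e + 1) - 1 + 2 ^ e * (2 * d + 1) by
    rw [pow_succ]; ring_nf; omega] at h1
  rw [show 2 * (2 ^ e - 1) + 1 = 2 ^ (e + 1) - 1 by rw [pow_succ]; omega] at h2
  rw [h1, h2]
  generalize periodDoubling _ = z
  revert z; decide

lemma shiftZ_injective_of_mem {x : ℤ → Fin 2} (hx : x ∈ substShift theta) :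
    Function.Injective (shiftZ · x) := by
  have key : ∀ a b : ℤ, a < b → shiftZ a x ≠ shiftZ b x := by
    intro a b hab h
    obtain ⟨q, hq, rfl⟩ : ∃ q : ℕ, 0 < q ∧ b = a + q := ⟨(b - a).toNat, by omega, by omega⟩
    have hper : ∀ i, x (i + q) = x i := fun i => by
      simpa [← add_assoc] using (congrFun h (i - a)).symm
    obtain ⟨r, hr⟩ := exists_periodDoubling_add_ne hq
    obtain ⟨n, hn⟩ := exists_block_eq_periodDoubling hx (r + q)
    have hrq : r + q < 2 ^ (r + q) := Nat.lt_two_pow_self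
    apply hr
    rw [← hn (r + q) hrq, ← hn r (by omega), Nat.cast_add, ← add_assoc, hper]
  intro a b h
  rcases lt_trichotomy a b with hab | rfl | hab
  · exact absurd h (key a b hab)
  · rfl
  · exact absurd h.symm (key b a hab)

def OccursAt (x : ℤ → Fin 2) (n : ℤ) : Prop := ∀ r : ℕ, r < 8 → x (n + r) = periodDoubling r

lemma occursAt_shiftZ {x : ℤ → Fin 2} {m n : ℤ} :
    OccursAt (shiftZ m x) n ↔ OccursAt x (n + m) := by
  simp only [OccursAt, shiftZ_apply, add_right_comm]

lemma not_occursAt_add_one {x : ℤ → Fin 2} {n : ℤ} (h : OccursAt x n) :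
    ¬ OccursAt x (n + 1) := by
  intro h'
  have h2 := h 2 (by norm_num)
  have h1 := h' 1 (by norm_num)
  rw [add_assoc, show (1 : ℤ) + (1 : ℕ) = (2 : ℕ) by norm_num, h2, periodDoubling.two,
    periodDoubling.one] at h1
  exact absurd h1 (by decide)

lemma isLocallyConstant_occursAt (n : ℤ) : IsLocallyConstant (OccursAt · n) := by
  have : (OccursAt · n) = (fun w : Fin 8 → Fin 2 => ∀ r : Fin 8, w r = periodDoubling r) ∘
      fun x r => x (n + (r : ℕ)) := by
    funext x
    simp only [OccursAt, Function.comp, Fin.forall_iff]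
  rw [this]
  exact (IsLocallyConstant.of_discrete _).comp_continuous
    (continuous_pi fun r => continuous_apply _)

def localJump (x : ℤ → Fin 2) : ℕ :=
  if OccursAt x 0 then 3 else if OccursAt x (-1) then 1 else 2

def backJump (x : ℤ → Fin 2) : ℕ :=
  if OccursAt x (-3) then 3 else if OccursAt x (-2) then 1 else 2

def speedInv (x : ℤ → Fin 2) : ℤ → Fin 2 := shiftZ (-(backJump x : ℤ)) x

lemma isLocallyConstant_localJump : IsLocallyConstant localJump :=
  (isLocallyConstant_occursAt 0).comp₂ (isLocallyConstant_occursAt (-1))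
    fun p q : Prop => if p then 3 else if q then 1 else 2

lemma isLocallyConstant_backJump : IsLocallyConstant backJump :=
  (isLocallyConstant_occursAt (-3)).comp₂ (isLocallyConstant_occursAt (-2))
    fun p q : Prop => if p then 3 else if q then 1 else 2

lemma backJump_shiftZ_localJump (x : ℤ → Fin 2) :
    backJump (shiftZ (localJump x) x) = localJump x := by
  have h21 : OccursAt x (-1) → ¬ OccursAt x (-2) := fun h1 h2 =>
    not_occursAt_add_one h2 (by norm_num [h1])
  unfold localJump
  split_ifs with h0 h1 <;> norm_num [backJump, occursAt_shiftZ, *]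

lemma localJump_shiftZ_neg_backJump (x : ℤ → Fin 2) :
    localJump (shiftZ (-(backJump x : ℤ)) x) = backJump x := by
  have h21 : OccursAt x (-2) → ¬ OccursAt x (-1) := fun h2 h1 =>
    not_occursAt_add_one h2 (by norm_num [h1])
  unfold backJump
  split_ifs with h3 h2 <;> norm_num [localJump, occursAt_shiftZ, *]

lemma mem_Aset_iff {x : ℤ → Fin 2} (hx : x ∈ substShift theta) : x ∈ Aset ↔ OccursAt x 0 := by
  have hw : ([0, 1, 0, 0, 0, 1, 0, 1] : List (Fin 2)) = (List.range 8).map periodDoubling := by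
    rw [show 8 = 2 ^ 3 from rfl, ← substPow_theta_zero 3]; rfl
  simp only [Aset, Set.mem_ofPred_eq, hx, true_and, hw, seqWord_eq_map_range_iff, OccursAt]

lemma mem_image_shiftMap_Aset_iff {x : ℤ → Fin 2} (hx : x ∈ substShift theta) :
    x ∈ shiftMap '' Aset ↔ OccursAt x (-1) := by
  have hshift : ∀ y : ℤ → Fin 2, shiftMap y = shiftZ 1 y := fun _ => rfl
  constructor
  · rintro ⟨y, hy, rfl⟩
    rw [hshift, occursAt_shiftZ]
    simpa using (mem_Aset_iff hy.1).1 hy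
  · intro h
    refine ⟨shiftZ (-1) x, (mem_Aset_iff (shiftZ_mem_substShift hx _)).2 ?_, ?_⟩
    · simpa [occursAt_shiftZ] using h
    · rw [hshift, shiftZ_shiftZ]; simp

lemma jump_eq_localJump {x : ℤ → Fin 2} (hx : x ∈ substShift theta) : jump x = localJump x := by
  simp only [jump, localJump, mem_Aset_iff hx, mem_image_shiftMap_Aset_iff hx]

lemma Sspeed_eq {x : ℤ → Fin 2} (hx : x ∈ substShift theta) :
    Sspeed x = shiftZ (localJump x) x := by
  rw [Sspeed, shiftMap_iterate, jump_eq_localJump hx]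

lemma speedInv_Sspeed {x : ℤ → Fin 2} (hx : x ∈ substShift theta) : speedInv (Sspeed x) = x := by
  rw [Sspeed_eq hx, speedInv, backJump_shiftZ_localJump, shiftZ_shiftZ, neg_add_cancel,
    shiftZ_zero]

lemma Sspeed_speedInv {x : ℤ → Fin 2} (hx : x ∈ substShift theta) : Sspeed (speedInv x) = x := by
  rw [speedInv, Sspeed_eq (shiftZ_mem_substShift hx _), localJump_shiftZ_neg_backJump,
    shiftZ_shiftZ, add_neg_cancel, shiftZ_zero]

lemma continuousOn_jump : ContinuousOn jump (substShift theta) :=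
  isLocallyConstant_localJump.continuous.continuousOn.congr fun _ hx => jump_eq_localJump hx

lemma restrictsToHomeomorph_Sspeed : RestrictsToHomeomorph Sspeed (substShift theta) := by
  have hS : Continuous fun x => shiftZ (localJump x : ℤ) x :=
    continuous_shiftZ_of_isLocallyConstant (isLocallyConstant_localJump.comp _)
  have hT : Continuous speedInv :=
    continuous_shiftZ_of_isLocallyConstant (isLocallyConstant_backJump.comp fun j => -(j : ℤ))
  refine ⟨{ toFun := fun x => ⟨Sspeed x, by rw [Sspeed_eq x.2]; exact shiftZ_mem_substShift x.2 _⟩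
            invFun := fun x => ⟨speedInv x, shiftZ_mem_substShift x.2 _⟩
            left_inv := fun x => Subtype.ext (speedInv_Sspeed x.2)
            right_inv := fun x => Subtype.ext (Sspeed_speedInv x.2)
            continuous_toFun := ?_
            continuous_invFun := (hT.comp continuous_subtype_val).subtype_mk _ }, fun _ => rfl⟩
  exact ((hS.comp continuous_subtype_val).congr fun x => (Sspeed_eq x.2).symm).subtype_mk _

def IsLevelSucc {β : Type} (c : ℤ → β) (next : ℤ → ℤ) : Prop :=
  ∀ n, n < next n ∧ c (next n) = c n ∧ ∀ m, n < m → m < next n → c m ≠ c n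

namespace IsLevelSucc

variable {β : Type} {c : ℤ → β} {next : ℤ → ℤ}

lemma apply_iterate (h : IsLevelSucc c next) (k : ℕ) (n : ℤ) : c (next^[k] n) = c n := by
  induction k generalizing n with
  | zero => rfl
  | succ k ih => rw [Function.iterate_succ_apply, ih, (h n).2.1]

lemma exists_iterate_eq (h : IsLevelSucc c next) {a b : ℤ} (hab : a ≤ b) (hc : c a = c b) :
    ∃ k, next^[k] a = b := by
  induction hd : (b - a).toNat using Nat.strong_induction_on generalizing a with
  | _ d ih =>
    rcases hab.eq_or_lt with rfl | hlt
    · exact ⟨0, rfl⟩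
    obtain ⟨hlt_next, hc_next, hne⟩ := h a
    have hle : next a ≤ b := not_lt.1 fun hb => hne b hlt hb hc.symm
    obtain ⟨k, hk⟩ := ih _ (by omega) hle (hc_next.trans hc) rfl
    exact ⟨k + 1, hk⟩

end IsLevelSucc

section Primitive

variable {G : Type} [AddCommGroup G]

def intPrimitive (f : ℤ → G) (n : ℤ) : G :=
  ∑ k ∈ Finset.Ico 0 n, f k - ∑ k ∈ Finset.Ico n 0, f k

lemma intPrimitive_add_one (f : ℤ → G) (n : ℤ) :
    intPrimitive f (n + 1) = intPrimitive f n + f n := by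
  unfold intPrimitive
  rcases le_or_gt 0 n with hn | hn
  · have : Finset.Ico 0 (n + 1) = insert n (Finset.Ico 0 n) := by ext; simp; omega
    rw [this, Finset.sum_insert (by simp), Finset.Ico_eq_empty_of_le hn,
      Finset.Ico_eq_empty_of_le (show (0 : ℤ) ≤ n + 1 by omega)]
    simp [add_comm]
  · have : Finset.Ico n 0 = insert n (Finset.Ico (n + 1) 0) := by ext; simp; omega
    rw [this, Finset.sum_insert (by simp), Finset.Ico_eq_empty_of_le hn.le,
      Finset.Ico_eq_empty_of_le (show n + 1 ≤ 0 by omega)]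
    abel

lemma intPrimitive_add_nat (f : ℤ → G) (n : ℤ) (j : ℕ) :
    intPrimitive f (n + j) = intPrimitive f n + ∑ i ∈ Finset.range j, f (n + i) := by
  induction j with
  | zero => simp
  | succ j ih => rw [Nat.cast_succ, ← add_assoc, intPrimitive_add_one, ih, Finset.sum_range_succ,
      add_assoc]

lemma isLevelSucc_intPrimitive (f : ℤ → G) (J : ℤ → ℕ) (hJ : ∀ n, 0 < J n)
    (hsum : ∀ n, ∑ i ∈ Finset.range (J n), f (n + i) = 0)
    (hpart : ∀ n, ∀ j, 0 < j → j < J n → ∑ i ∈ Finset.range j, f (n + i) ≠ 0) :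
    IsLevelSucc (intPrimitive f) fun n => n + J n := by
  intro n
  dsimp only
  refine ⟨by have := hJ n; omega, by rw [intPrimitive_add_nat, hsum, add_zero],
    fun m hm hmJ => ?_⟩
  obtain ⟨j, rfl⟩ : ∃ j : ℕ, m = n + j := ⟨(m - n).toNat, by omega⟩
  rw [intPrimitive_add_nat, Ne, add_eq_left]
  exact hpart n j (by omega) (by omega)

end Primitive

def labelStep (x : ℤ → Fin 2) (k : ℤ) : ZMod 2 := if OccursAt x (k - 1) then 0 else 1

def orbitLabel (x : ℤ → Fin 2) : ℤ → ZMod 2 := intPrimitive (labelStep x)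

def speedNext (x : ℤ → Fin 2) (n : ℤ) : ℤ := n + localJump (shiftZ n x)

lemma isLevelSucc_orbitLabel (x : ℤ → Fin 2) :
    IsLevelSucc (orbitLabel x) (speedNext x) := by
  refine isLevelSucc_intPrimitive _ _ (fun n => by unfold localJump; split_ifs <;> norm_num)
    (fun n => ?_) (fun n j hj hjJ => ?_)
  all_goals
    have hprev : OccursAt x n → ¬ OccursAt x (n - 1) := fun h h' =>
      not_occursAt_add_one h' (by simpa using h)
    have hnext : OccursAt x n → ¬ OccursAt x (n + 1) := not_occursAt_add_one
    have h21 : n + 2 - 1 = n + 1 := by ring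
    simp only [localJump, occursAt_shiftZ, zero_add, show (-1 : ℤ) + n = n - 1 by ring] at *
    split_ifs at * with h0 h1
  -- the label steps are `1, 0, 1` for jump 3, `0` for jump 1 and `1, 1` for jump 2
  all_goals
    (try interval_cases j) <;> simp [Finset.sum_range_succ, labelStep, *] <;> decide

lemma Sspeed_iterate_shiftZ {x : ℤ → Fin 2} (hx : x ∈ substShift theta) (k : ℕ) (n : ℤ) :
    Sspeed^[k] (shiftZ n x) = shiftZ ((speedNext x)^[k] n) x := by
  have : Function.Semiconj (shiftZ · x) (speedNext x) Sspeed := fun n => by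
    rw [Sspeed_eq (shiftZ_mem_substShift hx n), shiftZ_shiftZ, speedNext, add_comm]
  exact (this.iterate_right k n).symm

lemma exists_Sspeed_iterate_eq_shiftZ (k : ℕ) (y : ℤ → Fin 2) :
    ∃ j : ℕ, Sspeed^[k] y = shiftZ j y := by
  induction k with
  | zero => exact ⟨0, by simp⟩
  | succ k ih =>
    obtain ⟨j, hj⟩ := ih
    refine ⟨jump (shiftZ j y) + j, ?_⟩
    rw [Function.iterate_succ_apply', hj, Sspeed, shiftMap_iterate, shiftZ_shiftZ]
    push_cast; rfl

lemma mem_orbitIn_Sspeed_iff {x : ℤ → Fin 2} (hx : x ∈ substShift theta) (a : ℤ)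
    (y : ℤ → Fin 2) : y ∈ orbitIn Sspeed (substShift theta) (shiftZ a x) ↔
      ∃ n, orbitLabel x n = orbitLabel x a ∧ shiftZ n x = y := by
  have hL := isLevelSucc_orbitLabel x
  constructor
  · rintro ⟨-, k, rfl | hk⟩
    · exact ⟨_, hL.apply_iterate k a, (Sspeed_iterate_shiftZ hx k a).symm⟩
    · obtain ⟨j, hj⟩ := exists_Sspeed_iterate_eq_shiftZ k y
      have hy : shiftZ (a - j) x = y := by
        rw [hj] at hk
        rw [sub_eq_neg_add, ← shiftZ_shiftZ, ← hk, shiftZ_shiftZ]; simp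
      have hka : (speedNext x)^[k] (a - j) = a := shiftZ_injective_of_mem hx <| by
        simp only [← Sspeed_iterate_shiftZ hx, hy, hk]
      exact ⟨a - j, by rw [← hL.apply_iterate k, hka], hy⟩
  · rintro ⟨n, hn, rfl⟩
    refine ⟨shiftZ_mem_substShift hx n, ?_⟩
    rcases le_total a n with h | h
    · obtain ⟨k, hk⟩ := hL.exists_iterate_eq h hn.symm
      exact ⟨k, Or.inl (by rw [Sspeed_iterate_shiftZ hx, hk])⟩
    · obtain ⟨k, hk⟩ := hL.exists_iterate_eq h hn
      exact ⟨k, Or.inr (by rw [Sspeed_iterate_shiftZ hx, hk])⟩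

lemma mem_orbitIn_shiftMap_iff {x : ℤ → Fin 2} (hx : x ∈ substShift theta)
    (y : ℤ → Fin 2) :
    y ∈ orbitIn shiftMap (substShift theta) x ↔ ∃ n : ℤ, shiftZ n x = y := by
  simp only [orbitIn, shiftMap_iterate, Set.mem_ofPred_eq]
  constructor
  · rintro ⟨-, k, rfl | rfl⟩
    · exact ⟨k, rfl⟩
    · exact ⟨-k, by rw [shiftZ_shiftZ]; simp⟩
  · rintro ⟨n, rfl⟩
    refine ⟨shiftZ_mem_substShift hx n, n.natAbs, ?_⟩
    rcases Int.natAbs_eq n with h | h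
    · exact Or.inl (by rw [← h])
    · exact Or.inr (by rw [shiftZ_shiftZ, ← neg_eq_iff_eq_neg.2 h]; simp)

def OccursAtPD (u : ℕ) : Prop := ∀ r < 8, periodDoubling (u + r) = periodDoubling r

lemma occursAtPD_iff {u : ℕ} : OccursAtPD u ↔ ∃ i, u = 8 * i ∧ periodDoubling i = 0 := by
  constructor
  · intro h
    have h3 : periodDoubling 3 = 0 := by
      simpa [periodDoubling.one] using periodDoubling.two_mul_add_one 1
    have h7 : periodDoubling 7 = 1 := by
      simpa [h3] using periodDoubling.two_mul_add_one 3
    obtain ⟨a, ha, -⟩ :=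
      periodDoubling.eq_one_iff.1 ((h 1 (by norm_num)).trans periodDoubling.one)
    obtain rfl : u = 2 * a := by omega
    have ha1 : periodDoubling (a + 1) = 1 := periodDoubling.two_mul_add_one_eq_zero_iff.1 <| by
      rw [← (h 3 (by norm_num)).trans h3]; ring_nf
    obtain ⟨b, hb, -⟩ := periodDoubling.eq_one_iff.1 ha1
    obtain rfl : a = 2 * b := by omega
    have hb1 : periodDoubling (b + 1) = 1 := by
      rw [← periodDoubling.two_mul_add_one_eq_zero_iff,
        ← periodDoubling.two_mul_add_one_eq_one_iff, ← (h 7 (by norm_num)).trans h7]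
      ring_nf
    obtain ⟨i, hi, hi0⟩ := periodDoubling.eq_one_iff.1 hb1
    exact ⟨i, by omega, hi0⟩
  · rintro ⟨i, rfl, hi⟩ r hr
    exact periodDoubling.pow_mul_add (K := 3) hi hr

lemma sum_range_two_mul_indicator_periodDoubling (n : ℕ) :
    ∑ i ∈ Finset.range (2 * n), (if periodDoubling i = 0 then 1 else 0 : ZMod 2) =
      ∑ i ∈ Finset.range n, (if periodDoubling i = 0 then 1 else 0 : ZMod 2) := by
  induction n with
  | zero => rfl
  | succ n ih =>
    rw [show 2 * (n + 1) = 2 * n + 1 + 1 by ring, Finset.sum_range_succ, Finset.sum_range_succ,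
      ih, Finset.sum_range_succ, add_assoc, periodDoubling.two_mul, periodDoubling.two_mul_add_one]
    congr 1
    generalize periodDoubling n = z
    revert z; decide

lemma sum_range_two_pow_indicator_periodDoubling (m : ℕ) :
    ∑ i ∈ Finset.range (2 ^ m), (if periodDoubling i = 0 then 1 else 0 : ZMod 2) = 1 := by
  induction m with
  | zero => rw [pow_zero, Finset.sum_range_one, if_pos periodDoubling.zero]
  | succ m ih => rw [pow_succ, mul_comm, sum_range_two_mul_indicator_periodDoubling, ih]

lemma sum_range_indicator_occursAtPD (n : ℕ) :
    ∑ t ∈ Finset.range (8 * n), (if OccursAtPD t then 1 else 0 : ZMod 2) =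
      ∑ i ∈ Finset.range n, (if periodDoubling i = 0 then 1 else 0 : ZMod 2) := by
  induction n with
  | zero => rfl
  | succ n ih =>
    have h8n : OccursAtPD (8 * n) ↔ periodDoubling n = 0 := occursAtPD_iff.trans
      ⟨fun ⟨i, hi, h⟩ => by rwa [show n = i by omega], fun h => ⟨n, rfl, h⟩⟩
    have hblock : ∑ t ∈ Finset.range 8, (if OccursAtPD (8 * n + t) then 1 else 0 : ZMod 2) =
        if periodDoubling n = 0 then 1 else 0 := by
      rw [Finset.sum_range_succ', Finset.sum_eq_zero, zero_add, add_zero]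
      · simp only [h8n]
      · intro t ht
        refine if_neg ?_
        rintro h
        obtain ⟨i, hi, -⟩ := occursAtPD_iff.1 h
        simp only [Finset.mem_range] at ht
        omega
    rw [show 8 * (n + 1) = 8 * n + 8 by ring, Finset.sum_range_add, ih, hblock,
      Finset.sum_range_succ]

lemma sum_range_add_eq_of_periodic {M : Type} [AddCommGroup M] (g : ℕ → M) {a d L : ℕ}
    (h : ∀ t, a ≤ t → t < a + d → g (t + L) = g t) :
    ∑ i ∈ Finset.range L, g (a + d + i) = ∑ i ∈ Finset.range L, g (a + i) := by
  induction d with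
  | zero => rfl
  | succ d ih =>
    rw [← ih fun t h1 h2 => h t h1 (by omega)]
    have h1 := Finset.sum_range_succ (fun i => g (a + d + i)) L
    rw [Finset.sum_range_succ', h (a + d) (by omega) (by omega)] at h1
    simpa [add_assoc, add_comm 1] using h1

lemma occursAtPD_congr {u v : ℕ} (h : ∀ r < 8, periodDoubling (u + r) = periodDoubling (v + r)) :
    OccursAtPD u ↔ OccursAtPD v :=
  forall₂_congr fun r hr => by rw [h r hr]

lemma occursAt_iff_occursAtPD {x : ℤ → Fin 2} {n₀ : ℤ} {N u : ℕ}
    (hblk : ∀ r : ℕ, r < N → x (n₀ + r) = periodDoubling r) (hu : u + 8 ≤ N) :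
    OccursAt x (n₀ + u) ↔ OccursAtPD u :=
  forall₂_congr fun r hr => by rw [add_assoc, ← Nat.cast_add, hblk _ (by omega)]

lemma labelStep_eq_one_add (x : ℤ → Fin 2) (k : ℤ) :
    labelStep x k = 1 + if OccursAt x (k - 1) then 1 else 0 := by
  unfold labelStep; split_ifs <;> decide

/-- With `L = 2 ^ (m + 3)`, the word `pd[0, 4L)` is `L`-periodic on `[2L, 4L - 1)`, and a period
contains an odd number of occurrences of `w`, so shifting by `L` there flips the label. -/
lemma orbitLabel_add_block {x : ℤ → Fin 2} {n₀ : ℤ} {m d : ℕ}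
    (hblk : ∀ r : ℕ, r < 2 ^ (m + 5) → x (n₀ + r) = periodDoubling r)
    (hd : d + 9 < 2 ^ (m + 3)) :
    orbitLabel x (n₀ + (3 * 2 ^ (m + 3) + d + 1 : ℕ)) =
      orbitLabel x (n₀ + (2 * 2 ^ (m + 3) + d + 1 : ℕ)) + 1 := by
  obtain ⟨L, hL⟩ : ∃ L, L = 2 ^ (m + 3) := ⟨_, rfl⟩
  rw [← hL] at hd ⊢
  have h5 : 2 ^ (m + 5) = 4 * L := by rw [hL]; ring
  have h4 : 2 ^ (m + 4) = 2 * L := by rw [hL]; ring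
  set ind : ℕ → ZMod 2 := fun t => if OccursAtPD t then 1 else 0 with hind
  have hsteps : ∀ t < L,
      labelStep x (n₀ + (2 * L + d + 1 : ℕ) + t) = 1 + ind (2 * L + d + t) := by
    intro t ht
    rw [labelStep_eq_one_add,
      show n₀ + (2 * L + d + 1 : ℕ) + t - 1 = n₀ + (2 * L + d + t : ℕ) by push_cast; ring,
      occursAt_iff_occursAtPD hblk (by omega)]
  have hslide : ∑ t ∈ Finset.range L, ind (2 * L + d + t) =
      ∑ t ∈ Finset.range L, ind (2 * L + t) := by
    refine sum_range_add_eq_of_periodic ind fun t ht1 ht2 => ?_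
    obtain ⟨w, rfl⟩ : ∃ w, t = 2 * L + w := ⟨t - 2 * L, by omega⟩
    simp only [hind]
    congr 1
    refine propext (occursAtPD_congr fun r hr => ?_)
    rw [show 2 * L + w + L + r = L * 3 + (w + r) by ring,
      show 2 * L + w + r = L * 2 + (w + r) by ring, hL,
      periodDoubling.pow_mul_add_of_succ_lt _ (by omega),
      periodDoubling.pow_mul_add_of_succ_lt _ (by omega)]
  have hfirst : ∑ t ∈ Finset.range L, ind (2 * L + t) = ∑ t ∈ Finset.range L, ind t := by
    refine Finset.sum_congr rfl fun t ht => ?_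
    simp only [Finset.mem_range] at ht
    simp only [hind]
    congr 1
    refine propext (occursAtPD_congr fun r hr => ?_)
    rw [add_assoc, ← h4, ← mul_one (2 ^ (m + 4)),
      periodDoubling.pow_mul_add_of_succ_lt _ (by omega)]
  have hcount : ∑ t ∈ Finset.range L, ind t = 1 := by
    rw [hL, pow_add, mul_comm, show (2 : ℕ) ^ 3 = 8 by norm_num, hind,
      sum_range_indicator_occursAtPD, sum_range_two_pow_indicator_periodDoubling]
  have hLzero : (L : ZMod 2) = 0 := by
    rw [hL, Nat.cast_pow, pow_succ]; simp [show (2 : ZMod 2) = 0 from rfl]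
  rw [show 3 * L + d + 1 = 2 * L + d + 1 + L by ring, Nat.cast_add (2 * L + d + 1), ← add_assoc,
    orbitLabel, intPrimitive_add_nat, Finset.sum_congr rfl fun t ht =>
    hsteps t (Finset.mem_range.1 ht), Finset.sum_add_distrib, hslide, hfirst, hcount]
  simp [hLzero]

lemma zmod_two_eq_add_one_of_ne {v w : ZMod 2} (h : v ≠ w) : v = w + 1 := by
  revert v w; decide

lemma exists_orbitLabel_eq_and_agree {x y : ℤ → Fin 2} (hx : x ∈ substShift theta)
    (hy : y ∈ substShift theta) (M : ℕ) (v : ZMod 2) :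
    ∃ n, orbitLabel x n = v ∧ ∀ i : ℤ, i.natAbs ≤ M → shiftZ n x i = y i := by
  obtain ⟨s, hs⟩ := exists_window_eq_periodDoubling hy (-(M + 1)) (2 * M + 2)
  set m := s + 2 * M + 10
  have hm : m < 2 ^ (m + 3) :=
    Nat.lt_two_pow_self.trans_le (Nat.pow_le_pow_right (by norm_num) (by omega))
  obtain ⟨n₀, hblk⟩ := exists_block_eq_periodDoubling hx (m + 5)
  have h5 : 2 ^ (m + 5) = 4 * 2 ^ (m + 3) := by ring
  -- `y` on `[-M, M]` is `pd` on `[s + 1, s + 2M + 1]`, which reappears in blocks 2 and 3 of `x`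
  have hagree : ∀ j ≤ 3, ∀ i : ℤ, i.natAbs ≤ M →
      shiftZ (n₀ + (j * 2 ^ (m + 3) + (s + M) + 1 : ℕ)) x i = y i := by
    intro j hj i hi
    obtain ⟨r, hr⟩ : ∃ r : ℕ, (r : ℤ) = i + M + 1 := ⟨(i + M + 1).toNat, by omega⟩
    have hyr := hs r (by omega)
    have hj3 : 2 ^ (m + 3) * j ≤ 2 ^ (m + 3) * 3 := Nat.mul_le_mul_left _ hj
    rw [shiftZ_apply, show i + (n₀ + (j * 2 ^ (m + 3) + (s + M) + 1 : ℕ)) =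
      n₀ + (2 ^ (m + 3) * j + (s + r) : ℕ) by push_cast; rw [hr]; ring, hblk _ (by omega),
      periodDoubling.pow_mul_add_of_succ_lt _ (by omega), ← hyr]
    congr 1; omega
  have hflip := orbitLabel_add_block hblk (d := s + M) (by omega)
  by_cases h : orbitLabel x (n₀ + (2 * 2 ^ (m + 3) + (s + M) + 1 : ℕ)) = v
  · exact ⟨_, h, hagree 2 (by norm_num)⟩
  · refine ⟨_, ?_, hagree 3 le_rfl⟩
    rw [hflip]
    exact (zmod_two_eq_add_one_of_ne (Ne.symm h)).symm

lemma minimalOn_Sspeed : MinimalOn Sspeed (substShift theta) := by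
  intro x hx y hy
  rw [mem_closure_iff]
  intro o ho hyo
  obtain ⟨I, u, hu, hsub⟩ := isOpen_pi_iff.1 ho y hyo
  obtain ⟨n, hn, hagree⟩ :=
    exists_orbitLabel_eq_and_agree hx hy (I.sup Int.natAbs) (orbitLabel x 0)
  refine ⟨shiftZ n x, hsub fun i hi => ?_, ?_⟩
  · rw [hagree i (Finset.le_sup (f := Int.natAbs) hi)]
    exact (hu i hi).2
  · simpa using (mem_orbitIn_Sspeed_iff hx 0 _).2 ⟨n, hn, rfl⟩

lemma orbitNumberOn_Sspeed : OrbitNumberOn shiftMap Sspeed (substShift theta) 2 := by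
  intro x hx
  obtain ⟨m, hm, -⟩ := exists_orbitLabel_eq_and_agree hx hx 0 (orbitLabel x 0 + 1)
  have hne : orbitLabel x 0 ≠ orbitLabel x m := by rw [hm]; simp
  have hdistinct : ∀ a b, orbitLabel x a ≠ orbitLabel x b →
      shiftZ b x ∉ orbitIn Sspeed (substShift theta) (shiftZ a x) := fun a b hab hmem => by
    obtain ⟨n, hn, heq⟩ := (mem_orbitIn_Sspeed_iff hx a _).1 hmem
    rw [shiftZ_injective_of_mem hx heq] at hn
    exact hab hn.symm
  refine ⟨![shiftZ 0 x, shiftZ m x], fun i => ?_, fun i j hij => ?_, fun y hy => ?_⟩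
  · fin_cases i <;> exact (mem_orbitIn_shiftMap_iff hx _).2 ⟨_, rfl⟩
  · fin_cases i <;> fin_cases j
    · exact absurd rfl hij
    · exact hdistinct 0 m hne
    · exact hdistinct m 0 hne.symm
    · exact absurd rfl hij
  · obtain ⟨k, rfl⟩ := (mem_orbitIn_shiftMap_iff hx y).1 hy
    by_cases hk : orbitLabel x k = orbitLabel x 0
    · exact ⟨0, (mem_orbitIn_Sspeed_iff hx 0 _).2 ⟨k, hk, rfl⟩⟩
    · exact ⟨1, (mem_orbitIn_Sspeed_iff hx m _).2 ⟨k, hm ▸ zmod_two_eq_add_one_of_ne hk, rfl⟩⟩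

/-- the jump function p is continuous, S = σ^{p(·)} is a homeomorphism of X_θ,
every S-orbit is dense in X_θ, and the speedup has orbit number 2. -/
theorem statement1 :
    ContinuousOn jump (substShift theta) ∧
    RestrictsToHomeomorph Sspeed (substShift theta) ∧
    MinimalOn Sspeed (substShift theta) ∧
    OrbitNumberOn shiftMap Sspeed (substShift theta) 2 :=
  ⟨continuousOn_jump, restrictsToHomeomorph_Sspeed, minimalOn_Sspeed, orbitNumberOn_Sspeed⟩

end
end

section
/- Let φ be the substitution on B = {w₁,w₂,w₃,w₄} with φ(w₁) = w₁w₂w₃w₄, φ(w₂) = w₁w₂w₄w₃, φ(w₃) = w₁w₂w₃w₄w₃, φ(w₄) = w₁w₂w₄, and let ψ : B → {A,B,C,D,E}⁺ be given by ψ(w₁) = ABCCCBCBDBEE, ψ(w₂) = ABCCDBEEEBEB, ψ(w₃) = ABCCCBCBDBEEEBEB, ψ(w₄) = ABCCDBEE. For y ∈ X_φ let ψ(y) ∈ {A,B,C,D,E}^ℤ denote the bi-infinite concatenation …ψ(y₋₁)ψ(y₀)ψ(y₁)… with ψ(y₀) beginning at coordinate 0, and let Y be the closure of {σ^n(ψ(y))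 : y ∈ X_φ, n ∈ ℤ}. Then no element of Y is a Toeplitz sequence. -/
open Set Topology Classical

noncomputable section

/-- The substitution φ on B = {w₁, w₂, w₃, w₄} = Fin 4 (wᵢ = i - 1). -/
def phi : Fin 4 → List (Fin 4) := fun i =>
  if i = 0 then [0, 1, 2, 3]
  else if i = 1 then [0, 1, 3, 2]
  else if i = 2 then [0, 1, 2, 3, 2]
  else [0, 1, 3]

/-- The map ψ : B → {A,B,C,D,E}⁺ (letters A,…,E = 0,…,4). -/
def psi : Fin 4 → List (Fin 5) := fun i =>
  if i = 0 then [0, 1, 2, 2, 2, 1, 2, 1, 3, 1, 4, 4]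
  else if i = 1 then [0, 1, 2, 2, 3, 1, 4, 4, 4, 1, 4, 1]
  else if i = 2 then [0, 1, 2, 2, 2, 1, 2, 1, 3, 1, 4, 4, 4, 1, 4, 1]
  else [0, 1, 2, 2, 3, 1, 4, 4]

/-- Y: the closure of {σⁿ(ψ(y)) : y ∈ X_φ, n ∈ ℤ}. -/
def Yspace : Set (ℤ → Fin 5) :=
  closure {z | ∃ y ∈ substShift phi, ∃ w : ℤ → Fin 5,
    IsConcat psi y w ∧ ∃ n : ℤ, z = shiftZ n w}


namespace T3

def ell : Fin 4 → ℕ := fun b => if b = 2 then 4 else if b = 3 then 2 else 3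

def wsum (w : List (Fin 4)) : ℕ := (w.map ell).sum

/-- marked positions of an offset-system Σ along a word. -/
def PL (S : Fin 4 → List ℕ) : List (Fin 4) → List ℕ
  | [] => []
  | b :: t => S b ++ (PL S t).map (fun x => ell b + x)

@[simp] lemma wsum_nil : wsum [] = 0 := rfl
@[simp] lemma wsum_cons (b : Fin 4) (t : List (Fin 4)) : wsum (b :: t) = ell b + wsum t := by
  simp [wsum]
@[simp] lemma wsum_append (v w : List (Fin 4)) : wsum (v ++ w) = wsum v + wsum w := by
  simp [wsum]

@[simp] lemma PL_nil (S) : PL S [] = [] := rfl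
@[simp] lemma PL_cons (S) (b : Fin 4) (t) :
    PL S (b :: t) = S b ++ (PL S t).map (fun x => ell b + x) := rfl

lemma PL_append (S) (v w : List (Fin 4)) :
    PL S (v ++ w) = PL S v ++ (PL S w).map (fun x => wsum v + x) := by
  induction v with
  | nil => simp
  | cons b t ih =>
      simp only [List.cons_append, PL_cons, ih, List.map_append, List.map_map,
        List.append_assoc, wsum_cons]
      congr 2
      ext x
      simp [add_assoc]

def Valid (S : Fin 4 → List ℕ) : Prop := ∀ b : Fin 4, ∀ o ∈ S b, o < ell b

lemma PL_lt_wsum {S} (hS : Valid S) {u : List (Fin 4)} {x : ℕ} (hx : x ∈ PL S u) :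
    x < wsum u := by
  induction u generalizing x with
  | nil => simp at hx
  | cons b t ih =>
      simp only [PL_cons, List.mem_append, List.mem_map] at hx
      rcases hx with h | ⟨y, hy, rfl⟩
      · have := hS b x h; simp only [wsum_cons]; omega
      · have := ih hy; simp only [wsum_cons]; omega

/-- extraction of the letter decomposition at a start position. -/
lemma PL_start_extract {u : List (Fin 4)} {x : ℕ}
    (hx : x ∈ PL (fun _ => [0]) u) :
    ∃ (pre : List (Fin 4)) (b : Fin 4) (suf : List (Fin 4)),
      u = pre ++ b :: suf ∧ wsum pre = x := by
  induction u generalizing x with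
  | nil => simp at hx
  | cons b t ih =>
      simp only [PL_cons, List.mem_append, List.mem_map, List.mem_singleton] at hx
      rcases hx with h | ⟨y, hy, rfl⟩
      · exact ⟨[], b, t, by simp [h.symm], by simp [h.symm]⟩
      · obtain ⟨pre, c, suf, rfl, hw⟩ := ih hy
        exact ⟨b :: pre, c, suf, by simp, by simp [hw]⟩

/-- non-membership at a forbidden offset. -/
lemma PL_not_mem_offset {S} (hS : Valid S) {pre : List (Fin 4)} {b : Fin 4} {suf : List (Fin 4)}
    {δ : ℕ} (hδl : δ < ell b) (hδn : δ ∉ S b) :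
    wsum pre + δ ∉ PL S (pre ++ b :: suf) := by
  intro h
  rw [PL_append] at h
  rcases List.mem_append.mp h with h1 | h2
  · exact absurd (PL_lt_wsum hS h1) (by omega)
  · obtain ⟨y, hy, he⟩ := List.mem_map.mp h2
    have hyd : y = δ := by omega
    subst hyd
    rcases List.mem_append.mp (by simpa using hy :
        y ∈ S b ++ (PL S suf).map (fun x => ell b + x)) with h3 | h4
    · exact hδn h3
    · obtain ⟨z, hz, he2⟩ := List.mem_map.mp h4
      omega

/-- grid finder: a letter-start within distance 3 above any target. -/
lemma PL_start_find {u : List (Fin 4)} {T : ℕ} (h : T + 8 ≤ wsum u) :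
    ∃ x ∈ PL (fun _ => [0]) u, T ≤ x ∧ x ≤ T + 3 := by
  induction u generalizing T with
  | nil => simp only [wsum_nil] at h; omega
  | cons b t ih =>
      by_cases hT : T = 0
      · exact ⟨0, by simp, by omega, by omega⟩
      · have hb : ell b ≤ 4 := by fin_cases b <;> simp [ell]
        have hb2 : 2 ≤ ell b := by fin_cases b <;> simp [ell]
        by_cases hTb : T ≤ ell b
        · -- use start ell b (= first start of t, shifted)
          have ht : t ≠ [] := by
            rintro rfl; simp at h; omega
          obtain ⟨c, t', rfl⟩ := List.exists_cons_of_ne_nil ht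
          refine ⟨ell b + 0, ?_, by omega, by omega⟩
          simp only [PL_cons, List.mem_append, List.mem_map]
          right
          exact ⟨0, by simp, rfl⟩
        · have h' : (T - ell b) + 8 ≤ wsum t := by simp at h; omega
          obtain ⟨x, hx, h1, h2⟩ := ih h'
          refine ⟨ell b + x, ?_, by omega, by omega⟩
          simp only [PL_cons, List.mem_append, List.mem_map]
          right
          exact ⟨x, hx, rfl⟩

end T3

namespace T3

def SW : Fin 4 → List ℕ := fun _ => [0]
def SH : Fin 4 → List ℕ := fun b => if b = 1 then [0,2] else if b = 2 then [0,3] else [0]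
def SG : Fin 4 → List ℕ := fun b => if b = 1 then [1] else if b = 3 then [1] else [1,2]
def SE : Fin 4 → List ℕ := fun _ => []

def Sys : Fin 4 → Fin 4 → List ℕ := fun i =>
  if i = 0 then SW else if i = 1 then SH else if i = 2 then SG else SE

def dtab : Fin 4 → Fin 4 → Fin 4 := fun i r =>
  if i = 0 then (if r = 0 then 1 else if r = 1 then 3 else if r = 2 then 2 else 0)
  else if i = 1 then (if r = 0 then 1 else if r = 3 then 1 else 2)
  else if i = 2 then (if r = 0 then 2 else if r = 3 then 2 else 1)
  else 3

def delt : Fin 4 → ℕ := fun i => if i = 2 then 0 else 1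

def allFin (f : Fin 4 → Bool) : Bool := f 0 && f 1 && f 2 && f 3

lemma allFin_forall {f : Fin 4 → Bool} (h : allFin f = true) : ∀ i, f i = true := by
  intro i
  fin_cases i <;> simp [allFin] at h <;> tauto

lemma valid_Sys : ∀ i : Fin 4, Valid (Sys i) := by
  have h : allFin (fun i => allFin (fun b =>
      (Sys i b).all (fun o => decide (o < ell b)))) = true := by rfl
  intro i b o ho
  have h2 := allFin_forall (allFin_forall h i) b
  rw [List.all_eq_true] at h2
  exact of_decide_eq_true (h2 o ho)

lemma delt_facts : ∀ i b : Fin 4, delt i < ell b ∧ delt i ∉ Sys i b := by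
  have h : allFin (fun i => allFin (fun b =>
      decide (delt i < ell b) && !(decide (delt i ∈ Sys i b)))) = true := by rfl
  intro i b
  have h2 := allFin_forall (allFin_forall h i) b
  simp only [Bool.and_eq_true, Bool.not_eq_true', decide_eq_true_eq,
    decide_eq_false_iff_not] at h2
  exact h2

lemma wsum_phi : ∀ b : Fin 4, wsum (phi b) = 4 * ell b := by
  have h : allFin (fun b => decide (wsum (phi b) = 4 * ell b)) = true := by rfl
  intro b
  exact of_decide_eq_true (allFin_forall h b)

lemma zero_mem_SW (b : Fin 4) : 0 ∈ SW b := by simp [SW]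

lemma dl_block : ∀ i b : Fin 4, ∀ x ∈ PL (Sys i) (phi b), ∀ r : Fin 4,
    x % 4 = r.val → x / 4 ∈ Sys (dtab i r) b := by
  have h : allFin (fun i => allFin (fun b => (PL (Sys i) (phi b)).all (fun x =>
      allFin (fun r => !(decide (x % 4 = r.val)) || decide (x / 4 ∈ Sys (dtab i r) b)))))
      = true := by rfl
  intro i b x hx r hr
  have h2 := allFin_forall (allFin_forall h i) b
  rw [List.all_eq_true] at h2
  have h3 := allFin_forall (h2 x hx) r
  simp only [Bool.or_eq_true, Bool.not_eq_true', decide_eq_true_eq,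
    decide_eq_false_iff_not] at h3
  tauto

lemma PL_SE (u : List (Fin 4)) : PL SE u = [] := by
  induction u with
  | nil => rfl
  | cons b t ih => simp [PL, SE, ih]

lemma substPow_add {A : Type} (θ : A → List A) (m n : ℕ) (a : A) :
    substPow θ (m + n) a = (substPow θ m a).flatMap (substPow θ n) := by
  induction m generalizing a with
  | zero =>
      rw [Nat.zero_add]
      show substPow θ n a = ([a]).flatMap (substPow θ n)
      simp
  | succ m ih =>
      have : m + 1 + n = (m + n) + 1 := by omega
      rw [show m + 1 + n = (m + n) + 1 from by omega]
      show (θ a).flatMap (substPow θ (m + n)) = _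
      show _ = ((θ a).flatMap (substPow θ m)).flatMap (substPow θ n)
      rw [List.flatMap_assoc]
      congr 1
      funext x
      exact ih x

lemma substPow_one {A : Type} (θ : A → List A) (a : A) : substPow θ 1 a = θ a := by
  show (θ a).flatMap (substPow θ 0) = θ a
  simp [substPow]

lemma substPow_succ_right {A : Type} (θ : A → List A) (k : ℕ) (a : A) :
    substPow θ (k + 1) a = (substPow θ k a).flatMap θ := by
  rw [substPow_add]
  congr 1
  funext b
  exact substPow_one θ b

lemma wsum_flatMap_const {f : Fin 4 → List (Fin 4)} {k : ℕ}
    (hf : ∀ c, wsum (f c) = k * ell c) (w : List (Fin 4)) :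
    wsum (w.flatMap f) = k * wsum w := by
  induction w with
  | nil => simp
  | cons b t ih => simp [hf, ih, Nat.mul_add]

lemma wsum_substPow (m : ℕ) (b : Fin 4) : wsum (substPow phi m b) = 4 ^ m * ell b := by
  induction m generalizing b with
  | zero => simp [substPow]
  | succ m ih =>
      show wsum ((phi b).flatMap (substPow phi m)) = _
      rw [wsum_flatMap_const (fun c => ih c), wsum_phi]
      ring

lemma wsum_flatMap_substPow (m : ℕ) (w : List (Fin 4)) :
    wsum (w.flatMap (substPow phi m)) = 4 ^ m * wsum w :=
  wsum_flatMap_const (fun c => wsum_substPow m c) w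

/-- main derivation lemma over whole words. -/
lemma dl_word (i : Fin 4) (w : List (Fin 4)) (x : ℕ) (r : Fin 4)
    (hx : x ∈ PL (Sys i) (w.flatMap phi)) (hr : x % 4 = r.val) :
    x / 4 ∈ PL (Sys (dtab i r)) w := by
  induction w generalizing x with
  | nil => simp at hx
  | cons b t ih =>
      rw [show (b :: t).flatMap phi = phi b ++ t.flatMap phi from rfl, PL_append] at hx
      rcases List.mem_append.mp hx with h1 | h2
      · have := dl_block i b x h1 r hr
        simp only [PL_cons, List.mem_append]
        exact Or.inl this
      · obtain ⟨y, hy, he⟩ := List.mem_map.mp h2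
        rw [wsum_phi] at he
        have hy4 : y % 4 = r.val := by omega
        have := ih y hy hy4
        simp only [PL_cons, List.mem_append, List.mem_map]
        refine Or.inr ⟨y / 4, this, ?_⟩
        omega

/-- block placement: a marked point of one block, placed inside the flatMap word. -/
lemma PL_block_place {S} {f : Fin 4 → List (Fin 4)} {pre : List (Fin 4)} {b : Fin 4}
    {suf : List (Fin 4)} {e : ℕ} (he : e ∈ PL S (f b)) :
    wsum (pre.flatMap f) + e ∈ PL S ((pre ++ b :: suf).flatMap f) := by
  rw [List.flatMap_append, PL_append]
  refine List.mem_append.mpr (Or.inr ?_)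
  refine List.mem_map.mpr ⟨e, ?_, rfl⟩
  rw [show (b :: suf).flatMap f = f b ++ suf.flatMap f from rfl, PL_append]
  exact List.mem_append.mpr (Or.inl he)

end T3

namespace T3

def dval (L : List ℕ) : ℕ := L.foldl (fun acc d => 16 * acc + d) 0

lemma foldl_scale (L : List ℕ) (x : ℕ) :
    L.foldl (fun acc d => 16 * acc + d) x = x * 16 ^ L.length + dval L := by
  induction L generalizing x with
  | nil => simp [dval]
  | cons d L ih =>
      show L.foldl _ (16 * x + d) = _
      rw [ih]
      have h2 : dval (d :: L) = (16 * 0 + d) * 16 ^ L.length + dval L := by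
        show L.foldl _ (16 * 0 + d) = _
        rw [ih (16 * 0 + d)]
      rw [h2]
      simp [List.length_cons, pow_succ]
      ring

lemma dval_cons (d : ℕ) (L : List ℕ) : dval (d :: L) = d * 16 ^ L.length + dval L := by
  show L.foldl _ (16 * 0 + d) = _
  rw [foldl_scale]
  simp

lemma dval_append (L₁ L₂ : List ℕ) :
    dval (L₁ ++ L₂) = dval L₁ * 16 ^ L₂.length + dval L₂ := by
  induction L₁ with
  | nil => simp [dval]
  | cons d L ih =>
      rw [List.cons_append, dval_cons, ih, dval_cons]
      simp [List.length_append, pow_add]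
      ring

lemma dval_replicate_zero (m : ℕ) : dval (List.replicate m 0) = 0 := by
  induction m with
  | zero => rfl
  | succ m ih => rw [List.replicate_succ, dval_cons, ih]; simp

lemma dval_le {L : List ℕ} (h : ∀ d ∈ L, d ≤ 20) : dval L ≤ 2 * 16 ^ L.length := by
  induction L with
  | nil => simp [dval]
  | cons d L ih =>
      rw [dval_cons]
      have h1 : d ≤ 20 := h d (by simp)
      have h2 : dval L ≤ 2 * 16 ^ L.length := ih (fun x hx => h x (by simp [hx]))
      have h3 : (20 : ℕ) + 2 ≤ 2 * 16 := by norm_num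
      have h4 : d * 16 ^ L.length ≤ 20 * 16 ^ L.length :=
        Nat.mul_le_mul_right _ h1
      calc d * 16 ^ L.length + dval L ≤ 20 * 16 ^ L.length + 2 * 16 ^ L.length := by
            omega
        _ ≤ 2 * 16 ^ (L.length + 1) := by rw [pow_succ]; nlinarith [pow_pos (by norm_num : (0:ℕ) < 16) L.length]
      
lemma cover1 : ∀ b : Fin 4, ∀ d : ℕ, (d = 0 ∨ d = 3 ∨ d = 20) →
    d ∈ PL SW (substPow phi 2 b) := by
  have h : allFin (fun b => decide (0 ∈ PL SW (substPow phi 2 b)) &&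
      (decide (3 ∈ PL SW (substPow phi 2 b)) &&
       decide (20 ∈ PL SW (substPow phi 2 b)))) = true := by rfl
  intro b d hd
  have h2 := allFin_forall h b
  simp only [Bool.and_eq_true, decide_eq_true_eq] at h2
  rcases hd with rfl | rfl | rfl <;> tauto

lemma cover2 : ∀ L : List ℕ, (∀ d ∈ L, d = 0 ∨ d = 3 ∨ d = 20) → ∀ b : Fin 4,
    dval L ∈ PL SW (substPow phi (2 * L.length) b) := by
  intro L
  induction L with
  | nil =>
      intro _ b
      show (0 : ℕ) ∈ PL SW [b]
      simp [SW]
  | cons d L ih =>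
      intro hd b
      have hlen : 2 * (d :: L).length = 2 + 2 * L.length := by simp; omega
      rw [hlen, substPow_add]
      have hd1 : d ∈ PL SW (substPow phi 2 b) := cover1 b d (hd d (by simp))
      obtain ⟨pre, c, suf, heq, hw⟩ := PL_start_extract hd1
      have hih : dval L ∈ PL SW (substPow phi (2 * L.length) c) :=
        ih (fun x hx => hd x (by simp [hx])) c
      have hplace := PL_block_place (S := SW) (f := substPow phi (2 * L.length))
        (pre := pre) (b := c) (suf := suf) hih
      rw [← heq] at hplace
      have hws : wsum (pre.flatMap (substPow phi (2 * L.length))) = 4 ^ (2 * L.length) * d := by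
        rw [wsum_flatMap_substPow, hw]
      rw [hws] at hplace
      have h16 : (4 : ℕ) ^ (2 * L.length) = 16 ^ L.length := by
        rw [pow_mul]; norm_num
      rw [dval_cons]
      rw [h16] at hplace
      have : 16 ^ L.length * d + dval L = d * 16 ^ L.length + dval L := by ring
      rwa [this] at hplace

end T3

namespace T3

def seg (lam d : ℕ) : List ℕ := d :: List.replicate (lam - 1) 0

lemma seg_length {lam : ℕ} (h : 1 ≤ lam) (d : ℕ) : (seg lam d).length = lam := by
  simp [seg]; omega

lemma dval_seg (lam d : ℕ) : dval (seg lam d) = d * 16 ^ (lam - 1) := by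
  rw [seg, dval_cons, dval_replicate_zero]
  simp

lemma dval_flatten_rep (lam d : ℕ) (h : 1 ≤ lam) (n : ℕ) :
    ((List.replicate n (seg lam d)).flatten).length = n * lam ∧
    dval ((List.replicate n (seg lam d)).flatten)
      = d * (Finset.range n).sum (fun j => 16 ^ (lam - 1 + lam * j)) := by
  induction n with
  | zero => simp [dval]
  | succ n ih =>
      rw [List.replicate_succ, List.flatten_cons, dval_append]
      constructor
      · simp [ih.1, seg_length h]; ring
      · rw [ih.1, ih.2, dval_seg, Finset.sum_range_succ, mul_add, add_comm]
        congr 1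
        rw [pow_add]
        ring

/-- The residue realization: for any target residue mod odd q there is a digit list
of prescribed length realizing it. -/
lemma cover_res (q : ℕ) (hoddq : Odd q) (hq1 : 1 ≤ q) (ρ : ZMod q) :
    ∃ L : List ℕ, (∀ d ∈ L, d = 0 ∨ d = 3 ∨ d = 20) ∧
      L.length = q.totient * (2 * q) ∧ ((dval L : ℕ) : ZMod q) = ρ := by
  haveI : NeZero q := ⟨by omega⟩
  set lam := q.totient with hlam
  have hlam1 : 1 ≤ lam := Nat.totient_pos.mpr (by omega)
  have hcop2 : Nat.Coprime 2 q := Nat.coprime_two_left.mpr hoddq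
  have hcop : Nat.Coprime 16 q := by
    have := Nat.Coprime.pow_left 4 hcop2
    norm_num at this
    exact this
  have h16lam : ((16 : ZMod q)) ^ lam = 1 := by
    have h := Nat.ModEq.pow_totient hcop
    have h2 : ((16 ^ q.totient : ℕ) : ZMod q) = ((1 : ℕ) : ZMod q) :=
      (ZMod.natCast_eq_natCast_iff _ _ _).mpr h
    push_cast at h2
    exact h2
  have hu : IsUnit (16 : ZMod q) := (ZMod.isUnit_iff_coprime 16 q).mpr hcop
  set π : ZMod q := (16 : ZMod q) ^ (lam - 1) with hπ
  set invπ : ZMod q := ((hu.unit⁻¹ : (ZMod q)ˣ) : ZMod q) ^ (lam - 1) with hinvπ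
  have hππ : π * invπ = 1 := by
    rw [hπ, hinvπ, ← mul_pow]
    rw [IsUnit.mul_val_inv hu, one_pow]
  set w : ZMod q := ρ * invπ with hw
  set a : ℕ := (7 * w).val with ha
  set b : ℕ := (-w).val with hb
  have hav : a < q := ZMod.val_lt _
  have hbv : b < q := ZMod.val_lt _
  have hab : lam * (a + b) ≤ lam * (2 * q) := by
    apply Nat.mul_le_mul_left
    omega
  set L : List ℕ := List.replicate (lam * (2 * q) - lam * (a + b)) 0 ++
    ((List.replicate a (seg lam 3)).flatten ++ (List.replicate b (seg lam 20)).flatten)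
    with hL
  have hdig : ∀ d ∈ L, d = 0 ∨ d = 3 ∨ d = 20 := by
    intro d hd
    rw [hL] at hd
    simp only [List.mem_append, List.mem_replicate, List.mem_flatten] at hd
    rcases hd with ⟨_, rfl⟩ | ⟨l, hl, hdl⟩ | ⟨l, hl, hdl⟩
    · tauto
    · rcases hl with ⟨-, rfl⟩
      simp only [seg, List.mem_cons, List.mem_replicate] at hdl
      rcases hdl with rfl | ⟨-, rfl⟩ <;> tauto
    · rcases hl with ⟨-, rfl⟩
      simp only [seg, List.mem_cons, List.mem_replicate] at hdl
      rcases hdl with rfl | ⟨-, rfl⟩ <;> tauto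
  have h3len := (dval_flatten_rep lam 3 hlam1 a).1
  have h20len := (dval_flatten_rep lam 20 hlam1 b).1
  have hlen : L.length = lam * (2 * q) := by
    rw [hL]
    simp only [List.length_append, List.length_replicate, h3len, h20len]
    have : a * lam + b * lam = lam * (a + b) := by ring
    omega
  refine ⟨L, hdig, hlen, ?_⟩
  -- now compute the value mod q
  have hsum : ∀ (d n : ℕ),
      ((dval ((List.replicate n (seg lam d)).flatten) : ℕ) : ZMod q) = d * n * π := by
    intro d n
    rw [(dval_flatten_rep lam d hlam1 n).2]
    push_cast
    have hterm : ∀ j ∈ Finset.range n,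
        (d : ZMod q) * (16 : ZMod q) ^ (lam - 1 + lam * j) = (d : ZMod q) * π := by
      intro j _
      rw [pow_add, pow_mul, h16lam, one_pow, mul_one, hπ]
    rw [Finset.mul_sum, Finset.sum_congr rfl hterm, Finset.sum_const, Finset.card_range, nsmul_eq_mul]
    push_cast
    ring
  rw [hL, dval_append, dval_append, dval_replicate_zero]
  push_cast
  rw [hsum 3 a, hsum 20 b, zero_mul, zero_add, h20len]
  have e2 : ((16 : ZMod q)) ^ (b * lam) = 1 := by
    rw [mul_comm, pow_mul, h16lam, one_pow]
  rw [e2, mul_one]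
  have hval7 : ((a : ℕ) : ZMod q) = 7 * w := by
    rw [ha]; simp [ZMod.natCast_val, ZMod.cast_id]
  have hvalb : ((b : ℕ) : ZMod q) = -w := by
    rw [hb]; simp [ZMod.natCast_val, ZMod.cast_id]
  rw [hval7, hvalb]
  push_cast
  have hfin : (3 : ZMod q) * (7 * w) * π + 20 * -w * π = ρ := by
    have h1 : (3 : ZMod q) * (7 * w) * π + 20 * -w * π = w * π := by ring
    rw [h1, hw]
    calc ρ * invπ * π = ρ * (π * invπ) := by ring
      _ = ρ := by rw [hππ, mul_one]
  convert hfin using 2 <;> push_cast <;> ring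

end T3

namespace T3

def Hyp (S : Fin 4 → List ℕ) (q : ℕ) (u : List (Fin 4)) (c N : ℕ) : Prop :=
  ∀ j ≤ N, c + j * q ∈ PL S u

lemma hyp_mono {S q u c N N'} (h : Hyp S q u c N) (hle : N' ≤ N) : Hyp S q u c N' :=
  fun j hj => h j (le_trans hj hle)

lemma derive_step {i : Fin 4} {q : ℕ} (h4 : 4 ∣ q) {w : List (Fin 4)} {c N : ℕ}
    (r : Fin 4) (hr : c % 4 = r.val)
    (h : Hyp (Sys i) q (w.flatMap phi) c N) :
    Hyp (Sys (dtab i r)) (q / 4) w (c / 4) N := by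
  intro j hj
  have hx := h j hj
  obtain ⟨q', rfl⟩ := h4
  have hre : c + j * (4 * q') = c + 4 * (j * q') := by ring
  rw [hre] at hx
  have hx4 : (c + 4 * (j * q')) % 4 = r.val := by
    rw [Nat.add_mul_mod_self_left]; exact hr
  have hmem := dl_word i w _ r hx hx4
  have he : (c + 4 * (j * q')) / 4 = c / 4 + j * q' := by
    rw [Nat.add_mul_div_left _ _ (by norm_num : (0:ℕ) < 4)]
  rw [he] at hmem
  have he2 : 4 * q' / 4 = q' := by omega
  rw [he2]
  exact hmem

lemma double_step {S q u c N} (h : Hyp S q u c N) : Hyp S (2 * q) u c (N / 2) := by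
  intro j hj
  have h2 : c + (2 * j) * q = c + j * (2 * q) := by ring_nf
  have := h (2 * j) (by omega)
  rwa [h2] at this

theorem main : ∀ q, 1 ≤ q → ∀ i : Fin 4, ∃ N, 4 ≤ N ∧
    ∀ (K : ℕ) (a : Fin 4) (c : ℕ), ¬ Hyp (Sys i) q (substPow phi K a) c N := by
  intro q
  induction q using Nat.strong_induction_on with
  | _ q ih =>
  intro hq i
  have hell4 : ∀ b : Fin 4, ell b ≤ 4 := by decide
  rcases Nat.even_or_odd q with hev | hodd
  · -- even cases
    have hq2 : 2 ∣ q := hev.two_dvd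
    rcases Nat.even_or_odd (q / 2) with hev2 | hodd2
    · -- 4 ∣ q
      have h4 : 4 ∣ q := by
        obtain ⟨t, ht⟩ := hq2
        obtain ⟨u, hu⟩ := hev2
        refine ⟨u, by omega⟩
      have hq4 : 4 ≤ q := by
        obtain ⟨t, ht⟩ := h4; omega
      obtain ⟨N0, hN0a, hN0⟩ := ih (q / 4) (by omega) (by omega) (dtab i 0)
      obtain ⟨N1, hN1a, hN1⟩ := ih (q / 4) (by omega) (by omega) (dtab i 1)
      obtain ⟨N2, hN2a, hN2⟩ := ih (q / 4) (by omega) (by omega) (dtab i 2)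
      obtain ⟨N3, hN3a, hN3⟩ := ih (q / 4) (by omega) (by omega) (dtab i 3)
      refine ⟨N0 + N1 + N2 + N3 + 4, by omega, ?_⟩
      intro K a c hyp
      cases K with
      | zero =>
          have hm := hyp 4 (by omega)
          have hlt := PL_lt_wsum (valid_Sys i) hm
          have : wsum (substPow phi 0 a) = ell a := by
            show wsum [a] = ell a; simp
          have he4 : ell a ≤ 4 := hell4 a
          omega
      | succ K' =>
          rw [substPow_succ_right] at hyp
          rcases (show c % 4 = 0 ∨ c % 4 = 1 ∨ c % 4 = 2 ∨ c % 4 = 3 by omega) with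
            h | h | h | h
          · exact hN0 K' a (c / 4) (hyp_mono (derive_step h4 0 (by simpa using h) hyp)
              (by omega))
          · exact hN1 K' a (c / 4) (hyp_mono (derive_step h4 1 (by simpa using h) hyp)
              (by omega))
          · exact hN2 K' a (c / 4) (hyp_mono (derive_step h4 2 (by simpa using h) hyp)
              (by omega))
          · exact hN3 K' a (c / 4) (hyp_mono (derive_step h4 3 (by simpa using h) hyp)
              (by omega))
    · -- q ≡ 2 mod 4
      have hqq : 2 ≤ q := by
        obtain ⟨t, ht⟩ := hq2
        rcases Nat.eq_zero_or_pos t with rfl | hpos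
        · omega
        · omega
      obtain ⟨N0, hN0a, hN0⟩ := ih (q / 2) (by omega) (by omega) (dtab i 0)
      obtain ⟨N1, hN1a, hN1⟩ := ih (q / 2) (by omega) (by omega) (dtab i 1)
      obtain ⟨N2, hN2a, hN2⟩ := ih (q / 2) (by omega) (by omega) (dtab i 2)
      obtain ⟨N3, hN3a, hN3⟩ := ih (q / 2) (by omega) (by omega) (dtab i 3)
      refine ⟨2 * (N0 + N1 + N2 + N3 + 4), by omega, ?_⟩
      intro K a c hyp
      have hyp2 := double_step hyp
      have hhalf : 2 * (N0 + N1 + N2 + N3 + 4) / 2 = N0 + N1 + N2 + N3 + 4 := by omega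
      rw [hhalf] at hyp2
      have h4 : 4 ∣ 2 * q := by
        obtain ⟨t, ht⟩ := hq2
        exact ⟨t, by omega⟩
      have h2q4 : 2 * q / 4 = q / 2 := by omega
      cases K with
      | zero =>
          have hm := hyp 4 (by omega)
          have hlt := PL_lt_wsum (valid_Sys i) hm
          have : wsum (substPow phi 0 a) = ell a := by
            show wsum [a] = ell a; simp
          have he4 : ell a ≤ 4 := hell4 a
          omega
      | succ K' =>
          rw [substPow_succ_right] at hyp2
          rcases (show c % 4 = 0 ∨ c % 4 = 1 ∨ c % 4 = 2 ∨ c % 4 = 3 by omega) with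
            h | h | h | h
          · exact hN0 K' a (c / 4) (h2q4 ▸ hyp_mono (derive_step h4 0 (by simpa using h) hyp2)
              (by omega))
          · exact hN1 K' a (c / 4) (h2q4 ▸ hyp_mono (derive_step h4 1 (by simpa using h) hyp2)
              (by omega))
          · exact hN2 K' a (c / 4) (h2q4 ▸ hyp_mono (derive_step h4 2 (by simpa using h) hyp2)
              (by omega))
          · exact hN3 K' a (c / 4) (h2q4 ▸ hyp_mono (derive_step h4 3 (by simpa using h) hyp2)
              (by omega))
  · -- odd case
    obtain ⟨kbar, hkbar⟩ : ∃ k, k = q.totient * (2 * q) := ⟨_, rfl⟩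
    obtain ⟨B, hB⟩ : ∃ B, B = 16 ^ kbar := ⟨_, rfl⟩
    have h44 : (4:ℕ) ^ (2 * kbar) = 16 ^ kbar := by
      rw [pow_mul]; norm_num
    have hB4 : B = 4 ^ (2 * kbar) := by rw [hB, h44]
    have hB1 : 1 ≤ B := by
      rw [hB]; exact Nat.one_le_pow _ _ (by norm_num)
    refine ⟨16 * B, by omega, ?_⟩
    intro K a c hyp
    set u := substPow phi K a with hu
    have hwu : wsum u = 4 ^ K * ell a := wsum_substPow K a
    have hlt : c + (16 * B) * q < wsum u :=
      PL_lt_wsum (valid_Sys i) (hyp (16 * B) le_rfl)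
    have hqB : 16 * B ≤ (16 * B) * q := Nat.le_mul_of_pos_right _ (by omega)
    -- K is large
    have hK : 2 * kbar ≤ K := by
      by_contra hcon
      push_neg at hcon
      have h1 : 4 ^ K * ell a ≤ 4 ^ K * 4 := Nat.mul_le_mul_left _ (hell4 a)
      have h2 : (4:ℕ) ^ K * 4 = 4 ^ (K + 1) := by rw [pow_succ]
      have h3 : (4:ℕ) ^ (K + 1) ≤ 4 ^ (2 * kbar) := Nat.pow_le_pow_right (by norm_num) (by omega)
      rw [← hB4] at h3
      omega
    set m := K - 2 * kbar with hm
    have hKm : m + 2 * kbar = K := by omega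
    set v := substPow phi m a with hv
    have hudef : u = v.flatMap (substPow phi (2 * kbar)) := by
      rw [hu, hv, ← substPow_add, hKm]
    have hwuv : wsum u = B * wsum v := by
      rw [hudef, wsum_flatMap_substPow, hB4]
    set T := c / B + 1 with hT
    have hcB : B * (c / B) ≤ c := by
      rw [mul_comm]; exact Nat.div_mul_le_self c B
    have hTfind : T + 8 ≤ wsum v := by
      by_contra hcon
      push_neg at hcon
      have : wsum v ≤ T + 7 := by omega
      have h1 : B * wsum v ≤ B * (c / B) + 8 * B := by
        calc B * wsum v ≤ B * (T + 7) := Nat.mul_le_mul_left _ this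
          _ = B * (c / B) + 8 * B := by rw [hT]; ring
      omega
    obtain ⟨s, hs, hs1, hs2⟩ := PL_start_find (u := v) hTfind
    obtain ⟨pre, bg, suf, hvdec, hwpre⟩ := PL_start_extract hs
    -- choose the digit list
    have hq1 : 1 ≤ q := hq
    set ρ : ZMod q := (c : ZMod q) - ((B * s + delt i : ℕ) : ZMod q) with hρ
    obtain ⟨L, hLd, hLlen0, hLval⟩ := cover_res q hodd hq1 ρ
    have hLlen : L.length = kbar := by rw [hLlen0, hkbar]
    set e := dval L with he
    have hecov : e ∈ PL SW (substPow phi (2 * kbar) bg) := by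
      have := cover2 L hLd bg
      rwa [hLlen] at this
    have heB : e ≤ 2 * B := by
      have h1 := dval_le (L := L) (fun d hd => by rcases hLd d hd with rfl | rfl | rfl <;> omega)
      rw [hLlen, ← hB] at h1
      exact h1
    -- place the start
    have hplace : B * s + e ∈ PL SW u := by
      have h1 := PL_block_place (S := SW) (f := substPow phi (2 * kbar))
        (pre := pre) (b := bg) (suf := suf) hecov
      rw [← hvdec] at h1
      rw [hudef]
      have h2 : wsum (pre.flatMap (substPow phi (2 * kbar))) = B * s := by
        rw [wsum_flatMap_substPow, hwpre, hB4]
      rwa [h2] at h1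
    set x := B * s + e + delt i with hx
    -- x is congruent to c mod q and lies in the window
    have hdelt1 : delt i ≤ 1 := by fin_cases i <;> simp [delt]
    have hxc : (x : ZMod q) = (c : ZMod q) := by
      have : ((x : ℕ) : ZMod q) = ((B * s + delt i : ℕ) : ZMod q) + ((e : ℕ) : ZMod q) := by
        rw [hx]; push_cast; ring
      rw [this, he, hLval, hρ]
      ring
    have hxmod : x ≡ c [MOD q] := (ZMod.natCast_eq_natCast_iff _ _ _).mp hxc
    have hmodc := Nat.div_add_mod c B
    have hmltc : c % B < B := Nat.mod_lt _ (by omega)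
    have hBT : c + 1 ≤ B * T := by
      rw [hT, Nat.mul_add, Nat.mul_one]
      omega
    have hxlow : c + 1 ≤ x := by
      have : B * T ≤ B * s := Nat.mul_le_mul_left _ hs1
      omega
    have hxhigh : x ≤ c + (16 * B) * q := by
      have h1 : B * s ≤ B * (T + 3) := Nat.mul_le_mul_left _ hs2
      have h2 : B * (T + 3) = B * (c / B) + 4 * B := by rw [hT]; ring
      have h3 : 7 * B ≤ (16 * B) * q := le_trans (by omega) hqB
      omega
    have hdvd : q ∣ x - c := (Nat.modEq_iff_dvd' (by omega)).mp hxmod.symm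
    obtain ⟨j, hj⟩ := hdvd
    have hj' : x - c = j * q := by rw [hj, mul_comm]
    have hxj : x = c + j * q := by omega
    have hjq : j * q ≤ (16 * B) * q := by omega
    have hjN : j ≤ 16 * B := Nat.le_of_mul_le_mul_right hjq (by omega)
    have hmem : x ∈ PL (Sys i) u := hxj ▸ hyp j hjN
    -- but x is at a forbidden offset
    obtain ⟨pre2, b2, suf2, hudec2, hwpre2⟩ := PL_start_extract hplace
    have hforb := PL_not_mem_offset (valid_Sys i) (pre := pre2) (b := b2) (suf := suf2)
      (delt_facts i b2).1 (delt_facts i b2).2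
    rw [hwpre2] at hforb
    rw [hudec2] at hmem
    exact hforb (by rwa [hx] at hmem)

end T3


namespace T3

lemma psi_len : ∀ b : Fin 4, (psi b).length = 4 * ell b := by
  have h : allFin (fun b => decide ((psi b).length = 4 * ell b)) = true := by rfl
  intro b
  exact of_decide_eq_true (allFin_forall h b)

lemma psiStar_len (v : List (Fin 4)) : (v.flatMap psi).length = 4 * wsum v := by
  induction v with
  | nil => simp
  | cons b t ih =>
      show (psi b ++ t.flatMap psi).length = _
      rw [List.length_append, ih, psi_len]
      simp
      ring

lemma psi_zero_block : ∀ b : Fin 4, ∀ x, x < 4 * ell b →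
    ((psi b).getD x 1 = 0 ↔ x = 0) := by
  have h : allFin (fun b => (List.range (4 * ell b)).all
      (fun x => decide ((psi b).getD x 1 = 0 ↔ x = 0))) = true := by rfl
  intro b x hx
  have h2 := allFin_forall h b
  rw [List.all_eq_true] at h2
  exact of_decide_eq_true (h2 x (List.mem_range.mpr hx))

lemma psiA (v : List (Fin 4)) (x : ℕ) (hx : x < 4 * wsum v) :
    ((v.flatMap psi).getD x 1 = 0 ↔ ∃ s ∈ PL SW v, x = 4 * s) := by
  induction v generalizing x with
  | nil => simp at hx
  | cons b t ih =>
      have hlb : (psi b).length = 4 * ell b := psi_len b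
      have hell1 : 1 ≤ ell b := by fin_cases b <;> simp [ell]
      show ((psi b ++ t.flatMap psi).getD x 1 = 0 ↔ _)
      by_cases hcase : x < 4 * ell b
      · rw [List.getD_append _ _ _ _ (by omega)]
        rw [psi_zero_block b x hcase]
        constructor
        · rintro rfl
          exact ⟨0, by simp [SW], rfl⟩
        · rintro ⟨s, hs, rfl⟩
          simp only [PL_cons, List.mem_append, List.mem_map, SW, List.mem_singleton] at hs
          rcases hs with rfl | ⟨y, hy, rfl⟩
          · rfl
          · omega
      · rw [List.getD_append_right _ _ _ _ (by omega)]
        rw [hlb]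
        have hx' : x - 4 * ell b < 4 * wsum t := by
          simp only [wsum_cons] at hx; omega
        rw [ih _ hx']
        constructor
        · rintro ⟨s, hs, he⟩
          refine ⟨ell b + s, ?_, by omega⟩
          simp only [PL_cons, List.mem_append, List.mem_map, SW, List.mem_singleton]
          exact Or.inr ⟨s, hs, rfl⟩
        · rintro ⟨s, hs, rfl⟩
          simp only [PL_cons, List.mem_append, List.mem_map, SW, List.mem_singleton] at hs
          rcases hs with rfl | ⟨y, hy, rfl⟩
          · omega
          · exact ⟨y, hy, by omega⟩

/-- every window of length 49 in a ψ-concatenation contains the letter A = 0. -/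
lemma psiA_window (v : List (Fin 4)) (t : ℕ) (h : t + 49 ≤ 4 * wsum v) :
    ∃ j < 49, (v.flatMap psi).getD (t + j) 1 = 0 := by
  have hfind : (t / 4 + 1) + 8 ≤ wsum v := by omega
  obtain ⟨s, hs, hs1, hs2⟩ := PL_start_find hfind
  have hslt : s < wsum v := PL_lt_wsum (valid_Sys 0) hs
  refine ⟨4 * s - t, by omega, ?_⟩
  have ht4 : t ≤ 4 * s := by omega
  rw [show t + (4 * s - t) = 4 * s from by omega]
  rw [psiA v (4 * s) (by omega)]
  exact ⟨s, hs, rfl⟩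

end T3


namespace T3

lemma psi_len_bounds : ∀ b : Fin 4, 8 ≤ (psi b).length ∧ (psi b).length ≤ 16 := by
  have h : allFin (fun b => decide (8 ≤ (psi b).length) && decide ((psi b).length ≤ 16))
      = true := by rfl
  intro b
  have h2 := allFin_forall h b
  simp only [Bool.and_eq_true, decide_eq_true_eq] at h2
  exact h2

/-- Every finite window of an element of Yspace matches a slice of some ψ(φ^K(a)). -/
lemma window_embed (z : ℤ → Fin 5) (hz : z ∈ Yspace) (i : ℤ) (n : ℕ) :
    ∃ (K : ℕ) (a : Fin 4) (t : ℕ),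
      t + n ≤ 4 * wsum (substPow phi K a) ∧
      ∀ j : ℕ, j < n → z (i + j) = ((substPow phi K a).flatMap psi).getD (t + j) 1 := by
  have hz' : z ∈ closure {z | ∃ y ∈ substShift phi, ∃ w : ℤ → Fin 5,
      IsConcat psi y w ∧ ∃ n : ℤ, z = shiftZ n w} := hz
  set U : Set (ℤ → Fin 5) := {w | ∀ j : Fin n, w (i + (j : ℕ)) = z (i + (j : ℕ))} with hUdef
  have hU : IsOpen U := by
    have hUeq : U = ⋂ j : Fin n,
        (fun w : ℤ → Fin 5 => w (i + (j : ℕ))) ⁻¹' {z (i + (j : ℕ))} := by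
      ext w
      simp [hUdef, Set.mem_iInter]
    rw [hUeq]
    exact isOpen_iInter_of_finite fun j =>
      (continuous_apply _).isOpen_preimage _ (isOpen_discrete _)
  have hzU : z ∈ U := fun j => rfl
  obtain ⟨w, hwU, hwS⟩ := mem_closure_iff.mp hz' U hU hzU
  obtain ⟨y, hy, wt, hconc, mm, rfl⟩ := hwS
  obtain ⟨s, hs0, hstep, hblock⟩ := hconc
  -- growth of the block-start function s
  have hgrow : ∀ (k : ℤ) (d : ℕ), s k + 8 * d ≤ s (k + d) := by
    intro k d
    induction d with
    | zero => simp
    | succ d ihd =>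
        have h1 := hstep (k + d)
        have h2 := (psi_len_bounds (y (k + d))).1
        have hc : (k : ℤ) + ((d : ℕ) + 1 : ℕ) = (k + (d : ℕ)) + 1 := by push_cast; ring
        rw [hc, h1]
        have h3 : (8 : ℤ) ≤ ((psi (y (k + (d:ℕ)))).length : ℤ) := by exact_mod_cast h2
        push_cast
        push_cast at ihd
        omega
  -- matching of wt with ψ-images of seqWords of y
  have hseq : ∀ (d : ℕ) (k : ℤ), s (k + d) = s k + 4 * wsum (seqWord y k d) ∧
      ∀ j : ℕ, j < 4 * wsum (seqWord y k d) →
        wt (s k + j) = ((seqWord y k d).flatMap psi).getD j 1 := by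
    intro d
    induction d with
    | zero =>
        intro k
        constructor
        · have : seqWord y k 0 = [] := rfl
          rw [this]
          simp
        · intro j hj
          have : seqWord y k 0 = [] := rfl
          rw [this] at hj
          simp [wsum] at hj
    | succ d ihd =>
        intro k
        have hsw : seqWord y k (d + 1) = seqWord y k d ++ [y (k + d)] := by
          rw [seqWord, List.ofFn_succ', List.concat_eq_append]
          rfl
        obtain ⟨ih1, ih2⟩ := ihd k
        have hwsum : wsum (seqWord y k (d + 1)) = wsum (seqWord y k d) + ell (y (k + d)) := by
          rw [hsw, wsum_append, wsum_cons, wsum_nil]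
          omega
        have hlenA : ((seqWord y k d).flatMap psi).length = 4 * wsum (seqWord y k d) :=
          psiStar_len _
        have hstep' := hstep (k + d)
        have hplen : (psi (y (k + d))).length = 4 * ell (y (k + d)) := psi_len _
        have hcast : (k : ℤ) + ((d : ℕ) + 1 : ℕ) = (k + (d : ℕ)) + 1 := by push_cast; ring
        constructor
        · rw [hcast, hstep', ih1, hwsum, hplen]
          push_cast
          ring
        · intro j hj
          rw [hsw, List.flatMap_append]
          have hsingle : ([y (k + d)] : List (Fin 4)).flatMap psi = psi (y (k + d)) := by
            simp
          rw [hsingle]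
          by_cases hcase : j < 4 * wsum (seqWord y k d)
          · rw [List.getD_append _ _ _ _ (by omega)]
            exact ih2 j hcase
          · rw [List.getD_append_right _ _ _ _ (by omega)]
            rw [hwsum] at hj
            set idx := j - ((seqWord y k d).flatMap psi).length with hidx
            have hidxlt : idx < (psi (y (k + d))).length := by
              rw [hplen]
              omega
            have hb := hblock (k + d) ⟨idx, hidxlt⟩
            have hget : (psi (y (k + d))).get ⟨idx, hidxlt⟩
                = (psi (y (k + d))).getD idx 1 := by
              rw [List.getD_eq_getElem _ _ hidxlt]
              rfl
            rw [← hget]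
            rw [← hb]
            congr 1
            rw [ih1]
            push_cast
            omega
  -- choose a range of blocks covering the window
  set X : ℤ := i + mm with hX
  set e : ℕ := (-X).toNat with he
  set m₁ : ℤ := -(e : ℤ) with hm₁
  have hsm₁ : s m₁ ≤ X := by
    have h1 := hgrow m₁ e
    have h2 : m₁ + (e : ℕ) = 0 := by rw [hm₁]; push_cast; ring
    rw [h2, hs0] at h1
    have h3 : -X ≤ ((-X).toNat : ℤ) := Int.self_le_toNat _
    omega
  set d : ℕ := (X + n - s m₁).toNat with hd
  have hXn : X + n ≤ s (m₁ + d) := by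
    have h1 := hgrow m₁ d
    have h2 : X + n - s m₁ ≤ ((X + n - s m₁).toNat : ℤ) := Int.self_le_toNat _
    omega
  obtain ⟨hseq1, hseq2⟩ := hseq d m₁
  set offs : ℕ := (X - s m₁).toNat with hoffs
  have hoffs' : (offs : ℤ) = X - s m₁ := Int.toNat_of_nonneg (by omega)
  have hwin : offs + n ≤ 4 * wsum (seqWord y m₁ d) := by
    have := hseq1
    have h2 : (offs : ℤ) + n ≤ 4 * wsum (seqWord y m₁ d) := by
      rw [hoffs']
      omega
    exact_mod_cast h2
  -- embed the seqWord into a substitution word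
  obtain ⟨K, a, hinf⟩ := hy m₁ d
  obtain ⟨pre, suf, heq⟩ := hinf
  refine ⟨K, a, (pre.flatMap psi).length + offs, ?_, ?_⟩
  · have hlen : ((substPow phi K a).flatMap psi).length = 4 * wsum (substPow phi K a) :=
      psiStar_len _
    rw [← hlen, ← heq]
    rw [List.flatMap_append, List.flatMap_append]
    simp only [List.length_append]
    have h1 : offs + n ≤ ((seqWord y m₁ d).flatMap psi).length := by
      rw [psiStar_len]; exact hwin
    omega
  · intro j hj
    have hz1 : z (i + j) = shiftZ mm wt (i + j) := (hwU ⟨j, hj⟩).symm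
    have hz2 : shiftZ mm wt (i + j) = wt (X + j) := by
      show wt ((i + (j:ℕ)) + mm) = wt (X + j)
      congr 1
      rw [hX]
      ring
    have hz3 : wt (X + j) = wt (s m₁ + ((offs + j : ℕ) : ℤ)) := by
      congr 1
      push_cast
      omega
    have hz4 : wt (s m₁ + ((offs + j : ℕ) : ℤ))
        = ((seqWord y m₁ d).flatMap psi).getD (offs + j) 1 :=
      hseq2 (offs + j) (by omega)
    rw [hz1, hz2, hz3, hz4, ← heq]
    rw [List.flatMap_append, List.flatMap_append]
    rw [List.getD_append _ _ _ _ (by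
      rw [List.length_append, psiStar_len (seqWord y m₁ d)]
      omega)]
    rw [List.getD_append_right _ _ _ _ (by omega)]
    congr 1
    omega

end T3

/-- no element of Y is a Toeplitz sequence. -/
theorem statement3 : ∀ z ∈ Yspace, ¬ IsToeplitz z := by
  intro z hz hT
  -- Step 1: find a coordinate with letter A = 0
  obtain ⟨K₀, a₀, t₀, hb₀, hm₀⟩ := T3.window_embed z hz 0 49
  have hw₀ : t₀ + 49 ≤ 4 * T3.wsum (substPow phi K₀ a₀) := hb₀
  obtain ⟨j₀, hj₀, hA⟩ := T3.psiA_window (substPow phi K₀ a₀) t₀ hw₀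
  set i₀ : ℤ := (j₀ : ℤ) with hi₀
  have hzA : z i₀ = 0 := by
    have := hm₀ j₀ hj₀
    rw [show (0 : ℤ) + (j₀ : ℕ) = i₀ from by rw [hi₀]; ring] at this
    rw [this, hA]
  -- Step 2: the Toeplitz period at i₀
  obtain ⟨p, hp, hper⟩ := hT i₀
  have hperA : ∀ k : ℤ, z (i₀ + k * p) = 0 := fun k => (hper k).trans hzA
  -- Step 3: 4 divides p
  have h4p : 4 ∣ p := by
    obtain ⟨K, a, t, hb, hm⟩ := T3.window_embed z hz i₀ (p + 1)
    have h0 : z (i₀ + (0 : ℕ)) = ((substPow phi K a).flatMap psi).getD (t + 0) 1 :=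
      hm 0 (by omega)
    have hp' : z (i₀ + (p : ℕ)) = ((substPow phi K a).flatMap psi).getD (t + p) 1 :=
      hm p (by omega)
    have hz0 : z (i₀ + (0 : ℕ)) = 0 := by
      have := hperA 0
      simpa using this
    have hzp : z (i₀ + (p : ℕ)) = 0 := by
      have := hperA 1
      rw [one_mul] at this
      exact this
    have hA0 : ((substPow phi K a).flatMap psi).getD (t + 0) 1 = 0 := by rw [← h0]; exact hz0
    have hAp : ((substPow phi K a).flatMap psi).getD (t + p) 1 = 0 := by rw [← hp']; exact hzp
    obtain ⟨s0, hs0m, hs0e⟩ := (T3.psiA _ (t + 0) (by omega)).mp hA0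
    obtain ⟨s1, hs1m, hs1e⟩ := (T3.psiA _ (t + p) (by omega)).mp hAp
    omega
  obtain ⟨q, rfl⟩ := h4p
  have hq1 : 1 ≤ q := by omega
  -- Step 4: apply the main combinatorial theorem
  obtain ⟨N, hN4, hmain⟩ := T3.main q hq1 0
  obtain ⟨K, a, t, hb, hm⟩ := T3.window_embed z hz i₀ (N * (4 * q) + 1)
  have hA' : ∀ j : ℕ, j ≤ N → ∃ sj ∈ T3.PL T3.SW (substPow phi K a),
      t + j * (4 * q) = 4 * sj := by
    intro j hj
    have hidx : j * (4 * q) < N * (4 * q) + 1 := by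
      have : j * (4 * q) ≤ N * (4 * q) := Nat.mul_le_mul_right _ hj
      omega
    have h1 : z (i₀ + (j * (4 * q) : ℕ))
        = ((substPow phi K a).flatMap psi).getD (t + j * (4 * q)) 1 := hm _ hidx
    have h2 : z (i₀ + (j * (4 * q) : ℕ)) = 0 := by
      have := hperA j
      have hc : i₀ + (j : ℤ) * ((4 * q : ℕ) : ℤ) = i₀ + ((j * (4 * q) : ℕ) : ℤ) := by
        push_cast
        ring
      rw [hc] at this
      exact this
    have h3 : ((substPow phi K a).flatMap psi).getD (t + j * (4 * q)) 1 = 0 := by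
      rw [← h1]; exact h2
    exact (T3.psiA _ _ (by
      have : t + j * (4 * q) < t + (N * (4 * q) + 1) := by omega
      omega)).mp h3
  -- t is divisible by 4
  obtain ⟨sb, hsbm, hsbe⟩ := hA' 0 (by omega)
  have ht4 : t = 4 * sb := by simpa using hsbe
  -- build the Hyp hypothesis and contradict main
  apply hmain K a sb
  intro j hj
  obtain ⟨sj, hsjm, hsje⟩ := hA' j hj
  have hsj : sj = sb + j * q := by
    have h1 : j * (4 * q) = 4 * (j * q) := by ring
    omega
  rwa [← hsj]

end
end

section
/- Let x ∈ A^ℤ be a non-periodic Toeplitz sequence over a finite alphabet A with period structure (p_k)_{k≥1}, let X be the closure of the σ-orbit of x, and let c ≥ 1 be an integer. If gcd(c, p_k) > 1 for some k, then the homeomorphism σ^c : X → X is not minimal; that is, some σ^c-orbit in X is not dense. -/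
open Set Topology Classical

noncomputable section

/-- Auxiliary: the set of sequences agreeing with `shiftZ r x` on `PerSet x P - r`. -/
def Kset {A : Type} (x : ℤ → A) (P : ℕ) (r : ℤ) : Set (ℤ → A) :=
  {w | ∀ m : ℤ, (m + r) ∈ PerSet x P → w m = x (m + r)}

lemma Kset_closed {A : Type} [TopologicalSpace A] [DiscreteTopology A]
    (x : ℤ → A) (P : ℕ) (r : ℤ) : IsClosed (Kset x P r) := by
  have h : Kset x P r =
      ⋂ (m : ℤ) (_ : (m + r) ∈ PerSet x P), (fun w : ℤ → A => w m) ⁻¹' {x (m + r)} := by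
    ext w; simp [Kset]
  rw [h]
  exact isClosed_iInter fun m => isClosed_iInter fun _ =>
    (isClosed_singleton).preimage (continuous_apply m)

lemma shiftMap_iter {A : Type} (m : ℕ) (y : ℤ → A) :
    shiftMap^[m] y = shiftZ (m : ℤ) y := by
  induction m with
  | zero => funext n; simp [shiftZ]
  | succ m ih =>
      rw [Function.iterate_succ_apply', ih]
      funext n
      show y (n + 1 + (m : ℤ)) = y (n + ((m : ℕ) + 1 : ℕ))
      congr 1
      push_cast
      ring


/-- if gcd(c, p_k) > 1 for some k, then σᶜ is not minimal on X. -/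
theorem statement7 {A : Type} [Fintype A] [TopologicalSpace A] [DiscreteTopology A]
    (x : ℤ → A) (hx : IsToeplitz x) (hnp : ¬ IsPeriodicSeq x)
    (p : ℕ → ℕ) (hps : IsPeriodStructure x p)
    (c : ℕ) (hc : 1 ≤ c) (hgcd : ∃ k, 1 < Nat.gcd c (p k)) :
    ¬ MinimalOn (shiftMap^[c]) (orbitClosure x) := by
  classical
  intro hmin
  obtain ⟨k, hdgt⟩ := hgcd
  set P : ℕ := p k with hPdef
  set d : ℕ := Nat.gcd c P with hddef
  have hdc : d ∣ c := Nat.gcd_dvd_left _ _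
  have hdP : d ∣ P := Nat.gcd_dvd_right _ _
  obtain ⟨hPpos, hess⟩ := hps.2.1 k
  have hd1 : 1 < d := hdgt
  have hPposZ : (0 : ℤ) < (P : ℤ) := by exact_mod_cast hPpos
  -- membership of x and z in the orbit closure
  have hxX : x ∈ orbitClosure x := by
    apply subset_closure
    exact ⟨0, by funext m; simp [shiftZ]⟩
  set z : ℤ → A := shiftZ 1 x with hzdef
  have hzX : z ∈ orbitClosure x := subset_closure ⟨1, rfl⟩
  have hcl : z ∈ closure (orbitIn (shiftMap^[c]) (orbitClosure x) x) :=
    hmin x hxX hzX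
  -- the closed set U
  set F : Finset ℕ := (Finset.range P).filter (fun j => d ∣ j) with hFdef
  set U : Set (ℤ → A) := ⋃ j ∈ F, Kset x P (j : ℤ) with hUdef
  have hUclosed : IsClosed U := by
    apply Set.Finite.isClosed_biUnion (F.finite_toSet)
    intro j _
    exact Kset_closed x P (j : ℤ)
  -- a generic membership lemma
  have key : ∀ (u : ℤ) (w : ℤ → A), (d : ℤ) ∣ u → (∀ m, w m = x (m + u)) → w ∈ U := by
    intro u w hud hw
    have hrd : (d : ℤ) ∣ u % (P : ℤ) := by
      have h1 : u % (P : ℤ) % (d : ℤ) = u % (d : ℤ) :=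
        Int.emod_emod_of_dvd u (Int.natCast_dvd_natCast.mpr hdP)
      have h2 : u % (d : ℤ) = 0 := Int.emod_eq_zero_of_dvd hud
      exact Int.dvd_of_emod_eq_zero (by rw [h1, h2])
    have hr0 : 0 ≤ u % (P : ℤ) := Int.emod_nonneg u (by positivity)
    have hrP : u % (P : ℤ) < (P : ℤ) := Int.emod_lt_of_pos u hPposZ
    set j : ℕ := (u % (P : ℤ)).toNat with hjdef
    have hjr : (j : ℤ) = u % (P : ℤ) := Int.toNat_of_nonneg hr0
    have hjF : j ∈ F := by
      rw [hFdef, Finset.mem_filter, Finset.mem_range]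
      constructor
      · exact_mod_cast hjr ▸ hrP
      · exact_mod_cast hjr ▸ hrd
    have hmem : w ∈ Kset x P (j : ℤ) := by
      intro m hm
      have heq : m + u = (m + (j : ℤ)) + (u / (P : ℤ)) * (P : ℤ) := by
        have := Int.mul_ediv_add_emod u (P : ℤ)
        rw [hjr]; linarith
      rw [hw m, heq, hm (u / (P : ℤ))]
    exact Set.mem_biUnion hjF hmem
  -- the orbit is contained in U
  have hsub : orbitIn (shiftMap^[c]) (orbitClosure x) x ⊆ U := by
    rintro w ⟨hwX, n, hn | hn⟩
    · have h1 : (shiftMap^[c])^[n] x = shiftMap^[c * n] x := by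
        rw [Function.iterate_mul]
      rw [h1, shiftMap_iter] at hn
      refine key ((c * n : ℕ) : ℤ) w ?_ ?_
      · exact_mod_cast Int.natCast_dvd_natCast.mpr (Dvd.dvd.mul_right hdc n)
      · intro m; rw [← hn]; rfl
    · have h1 : (shiftMap^[c])^[n] w = shiftMap^[c * n] w := by
        rw [Function.iterate_mul]
      rw [h1, shiftMap_iter] at hn
      refine key (-((c * n : ℕ) : ℤ)) w ?_ ?_
      · exact dvd_neg.mpr (Int.natCast_dvd_natCast.mpr (Dvd.dvd.mul_right hdc n))
      · intro m
        have := congrFun hn (m - ((c * n : ℕ) : ℤ))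
        simp only [shiftZ] at this ⊢
        have h2 : m - ((c * n : ℕ) : ℤ) + ((c * n : ℕ) : ℤ) = m := by ring
        rw [h2] at this
        rw [this]
        congr 1
  have hzU : z ∈ U := closure_minimal hsub hUclosed hcl
  -- extract j
  rw [hUdef] at hzU
  simp only [Set.mem_iUnion] at hzU
  obtain ⟨j, hjF, hzK⟩ := hzU
  rw [hFdef, Finset.mem_filter, Finset.mem_range] at hjF
  obtain ⟨hjP, hdj⟩ := hjF
  set r : ℤ := (j : ℤ) with hrdef
  set e : ℤ := 1 - r with hedef
  -- Per set facts
  have hA : ∀ (t : ℤ), ∀ a ∈ PerSet x P, a + t * (P : ℤ) ∈ PerSet x P := by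
    intro t a ha n
    have e1 : a + t * (P : ℤ) + n * (P : ℤ) = a + (t + n) * (P : ℤ) := by ring
    rw [e1, ha (t + n), ha t]
  have hBD : ∀ a ∈ PerSet x P, ∀ n : ℤ, x (a + e + n * (P : ℤ)) = x a := by
    intro a ha n
    have hm : (a - r + n * (P : ℤ)) + r ∈ PerSet x P := by
      have : (a - r + n * (P : ℤ)) + r = a + n * (P : ℤ) := by ring
      rw [this]; exact hA n a ha
    have h1 := hzK (a - r + n * (P : ℤ)) hm
    have h2 : z (a - r + n * (P : ℤ)) = x (a + e + n * (P : ℤ)) := by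
      show x ((a - r + n * (P : ℤ)) + 1) = _
      congr 1; rw [hedef]; ring
    have h3 : x ((a - r + n * (P : ℤ)) + r) = x a := by
      have : (a - r + n * (P : ℤ)) + r = a + n * (P : ℤ) := by ring
      rw [this]; exact ha n
    rw [← h2, h1, h3]
  have hD : ∀ a ∈ PerSet x P, x (a + e) = x a := by
    intro a ha
    have := hBD a ha 0
    simpa using this
  have hB : ∀ a ∈ PerSet x P, a + e ∈ PerSet x P := by
    intro a ha n
    rw [hBD a ha n, hD a ha]
  have hB' : ∀ (n : ℕ), ∀ a ∈ PerSet x P, a + (n : ℤ) * e ∈ PerSet x P := by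
    intro n
    induction n with
    | zero => intro a ha; simpa using ha
    | succ n ih =>
        intro a ha
        have := hB _ (ih a ha)
        have e1 : a + (n : ℤ) * e + e = a + ((n : ℕ) + 1 : ℕ) * e := by
          push_cast; ring
        rwa [e1] at this
  have hC : ∀ a ∈ PerSet x P, a - e ∈ PerSet x P := by
    intro a ha
    have h1 := hB' (P - 1) a ha
    have h2 := hA (-e) _ h1
    have e1 : a + ((P - 1 : ℕ) : ℤ) * e + (-e) * (P : ℤ) = a - e := by
      have : ((P - 1 : ℕ) : ℤ) = (P : ℤ) - 1 := by
        have : 1 ≤ P := hPpos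
        push_cast [this]; ring
      rw [this]; ring
    rwa [e1] at h2
  -- the contradiction via the essential period
  set q : ℕ := (e % (P : ℤ)).toNat with hqdef
  have hq0 : 0 ≤ e % (P : ℤ) := Int.emod_nonneg e (by positivity)
  have hqr : (q : ℤ) = e % (P : ℤ) := Int.toNat_of_nonneg hq0
  have hqP : q < P := by
    have := Int.emod_lt_of_pos e hPposZ
    omega
  have hqe : (q : ℤ) = e - (P : ℤ) * (e / (P : ℤ)) := by
    have := Int.mul_ediv_add_emod e (P : ℤ)
    rw [hqr]; linarith
  have hqpos : 0 < q := by
    rcases Nat.eq_zero_or_pos q with h0 | h; swap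
    · exact h
    exfalso
    have hPe : (P : ℤ) ∣ e := by
      have : e % (P : ℤ) = 0 := by omega
      exact Int.dvd_of_emod_eq_zero this
    have hde : (d : ℤ) ∣ e := dvd_trans (Int.natCast_dvd_natCast.mpr hdP) hPe
    have hdr : (d : ℤ) ∣ r := Int.natCast_dvd_natCast.mpr hdj
    have hd1' : (d : ℤ) ∣ 1 := by
      have : e + r = 1 := by rw [hedef]; ring
      rw [← this]; exact dvd_add hde hdr
    have : d ∣ 1 := by exact_mod_cast hd1'
    have := Nat.le_of_dvd one_pos this
    omega
  apply hess
  refine ⟨q, hqpos, hqP, ?_, ?_⟩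
  · ext b
    constructor
    · rintro ⟨a, ha, rfl⟩
      have h1 := hA (-(e / (P : ℤ))) _ (hB a ha)
      have e1 : a + e + (-(e / (P : ℤ))) * (P : ℤ) = a + (q : ℤ) := by
        rw [hqe]; ring
      rwa [e1] at h1
    · intro hb
      refine ⟨b - (q : ℤ), ?_, by ring⟩
      have h1 := hA (e / (P : ℤ)) _ (hC b hb)
      have e1 : b - e + (e / (P : ℤ)) * (P : ℤ) = b - (q : ℤ) := by
        rw [hqe]; ring
      rwa [e1] at h1
  · intro a ha
    have h1 := (hB a ha) (-(e / (P : ℤ)))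
    have e1 : a + e + (-(e / (P : ℤ))) * (P : ℤ) = a + (q : ℤ) := by
      rw [hqe]; ring
    rw [e1] at h1
    rw [h1, hD a ha]


end
end
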